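/- arXiv:2304.14726 — 4 statements merged into one kernel-verified Lean document; each statement's English description precedes it below -/
import Mathlib

section
/- Under hypotheses (E1)–(E4), the translates of v_φ^μ are equi-integrable uniformly in φ: for every fixed μ ∈ (0, a_m] and every ε > 0 there exists η > 0 such that for all h ∈ (0, η) and all φ ∈ L¹(J,E₀), ∫₀^{a_m} ‖ṽ_φ^μ(a+h) − ṽ_φ^μ(a)‖_{E₀} da ≤ ε ‖φ‖_{L¹(J,E₀)}, where ṽ_φ^μ denotes the extension of v_φ^μ to [0,∞) by zero outside J. -/
/-!
For `a + h ≤ a_m` split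
`v(a+h) - v(a) = ∫₀^a (Π(μ+a+h,σ) - Π(μ+a,σ)) φ(σ) dσ + ∫_a^{a+h} Π(μ+a+h,σ) φ(σ) dσ`.
Since `μ > 0`, the kernel is only evaluated on the compact set `{σ + μ ≤ t ≤ 2a_m}`, away from
the diagonal, where `Π` is uniformly continuous; so the first term is at most `δ ‖φ‖₁` with `δ`
small for small `h`, independently of `φ`. The second term is at most `M ∫_a^{a+h} ‖φ‖`, and
integrating a sliding window of length `h` over `a` costs a factor `h`. For `a > a_m - h` only
`‖v(a)‖ ≤ M ‖φ‖₁` is left, on a set of length `h`. Altogether the integral is at most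
`(a_m δ + 2 M h) ‖φ‖₁`.
-/

open MeasureTheory Set

theorem Monotone.intervalIntegral_comp_add_sub_le {F : ℝ → ℝ} (hF : Monotone F) {h : ℝ}
    (hh : 0 ≤ h) (x y : ℝ) :
    ∫ a in x..y, (F (a + h) - F a) ≤ h * (F (y + h) - F x) := by
  have hint : ∀ s t, IntervalIntegrable F volume s t := fun _ _ => hF.intervalIntegrable
  have hFh : Monotone fun a => F (a + h) := fun s t hst => hF (by linarith)
  have hshift : ∫ a in x..y, (F (a + h) - F a) =
      (∫ a in y..y + h, F a) - ∫ a in x..x + h, F a := by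
    rw [intervalIntegral.integral_sub hFh.intervalIntegrable (hint x y),
      intervalIntegral.integral_comp_add_right,
      intervalIntegral.integral_interval_sub_interval_comm' (hint _ _) (hint _ _) (hint _ _)]
  have hupper : ∫ a in y..y + h, F a ≤ h * F (y + h) := by
    have := intervalIntegral.integral_mono_on (a := y) (b := y + h) (by linarith) (hint _ _)
      intervalIntegrable_const fun a ha => hF ha.2
    simpa using this
  have hlower : h * F x ≤ ∫ a in x..x + h, F a := by
    have := intervalIntegral.integral_mono_on (a := x) (b := x + h) (by linarith)
      intervalIntegrable_const (hint _ _) fun a ha => hF ha.1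
    simpa using this
  rw [hshift]
  linarith

theorem MeasureTheory.Integrable.intervalIntegral_primitive_sub {ψ : ℝ → ℝ} (hψ : Integrable ψ)
    (s t : ℝ) :
    (∫ σ in (0 : ℝ)..t, ψ σ) - ∫ σ in (0 : ℝ)..s, ψ σ = ∫ σ in s..t, ψ σ :=
  intervalIntegral.integral_interval_sub_left hψ.intervalIntegrable hψ.intervalIntegrable

theorem MeasureTheory.Integrable.continuous_intervalIntegral_self_add {ψ : ℝ → ℝ}
    (hψ : Integrable ψ) (h : ℝ) :
    Continuous fun a => ∫ σ in a..a + h, ψ σ := by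
  have hF := intervalIntegral.continuous_primitive (fun _ _ => hψ.intervalIntegrable) 0
  convert (hF.comp (continuous_add_const h)).sub hF using 1
  exact funext fun a => (hψ.intervalIntegral_primitive_sub a (a + h)).symm

theorem MeasureTheory.Integrable.intervalIntegral_intervalIntegral_self_add_le {ψ : ℝ → ℝ}
    (hψ : Integrable ψ) (hψ0 : 0 ≤ ψ) {h x y : ℝ} (hh : 0 ≤ h) (hxy : x ≤ y) :
    ∫ a in x..y, ∫ σ in a..a + h, ψ σ ≤ h * ∫ σ, ψ σ := by
  set F : ℝ → ℝ := fun t => ∫ σ in (0 : ℝ)..t, ψ σ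
  have hF : Monotone F := fun s t hst => by
    have := intervalIntegral.integral_nonneg (μ := volume) hst fun σ _ => hψ0 σ
    linarith [hψ.intervalIntegral_primitive_sub s t]
  calc ∫ a in x..y, ∫ σ in a..a + h, ψ σ = ∫ a in x..y, (F (a + h) - F a) := by
        simp only [F, hψ.intervalIntegral_primitive_sub]
    _ ≤ h * (F (y + h) - F x) := hF.intervalIntegral_comp_add_sub_le hh x y
    _ ≤ h * ∫ σ, ψ σ := by
        rw [hψ.intervalIntegral_primitive_sub, intervalIntegral.integral_of_le (by linarith)]
        exact mul_le_mul_of_nonneg_left (setIntegral_le_integral hψ (.of_forall hψ0)) hh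

theorem ContinuousOn.exists_forall_norm_sub_le_offDiag {F : Type*} [SeminormedAddCommGroup F]
    {P : ℝ → ℝ → F} {c μ : ℝ}
    (hP : ContinuousOn (fun p : ℝ × ℝ => P p.1 p.2) {p | 0 ≤ p.2 ∧ p.2 < p.1 ∧ p.1 ≤ c})
    (hμ : 0 < μ) {δ : ℝ} (hδ : 0 < δ) :
    ∃ η > 0, ∀ h, 0 ≤ h → h ≤ η → ∀ a σ, 0 ≤ σ → σ + μ ≤ a → a + h ≤ c →
      ‖P (a + h) σ - P a σ‖ ≤ δ := by
  set K : Set (ℝ × ℝ) := {p | 0 ≤ p.2 ∧ p.2 + μ ≤ p.1 ∧ p.1 ≤ c}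
  have hK : IsCompact K := by
    refine (isCompact_Icc.prod isCompact_Icc).of_isClosed_subset ?_
      (fun p hp => ⟨⟨by linarith [hp.1, hp.2.1], hp.2.2⟩, ⟨hp.1, by linarith [hp.2.1, hp.2.2]⟩⟩ :
        K ⊆ Icc 0 c ×ˢ Icc 0 c)
    exact (isClosed_le continuous_const continuous_snd).inter
      ((isClosed_le (continuous_snd.add continuous_const) continuous_fst).inter
        (isClosed_le continuous_fst continuous_const))
  have hUC := hK.uniformContinuousOn_of_continuous
    (hP.mono fun p hp => ⟨hp.1, by linarith [hp.2.1], hp.2.2⟩)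
  obtain ⟨η, hη, hclose⟩ := Metric.uniformContinuousOn_iff_le.mp hUC δ hδ
  refine ⟨η, hη, fun h hh hhη a σ hσ hσa hac => ?_⟩
  rw [← dist_eq_norm]
  refine hclose (a + h, σ) ⟨hσ, by linarith, hac⟩ (a, σ) ⟨hσ, hσa, by linarith⟩ ?_
  simpa [Prod.dist_eq, Real.dist_eq, abs_of_nonneg hh] using ⟨hhη, hη.le⟩

theorem MeasureTheory.IntegrableOn.intervalIntegrable_of_Icc_subset {E : Type*}
    [NormedAddCommGroup E] {φ : ℝ → E} {T : ℝ} (hφ : IntegrableOn φ (Icc 0 T))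
    {a b : ℝ} (ha : 0 ≤ a) (hab : a ≤ b) (hbT : b ≤ T) : IntervalIntegrable φ volume a b :=
  (hφ.mono_set (by rw [uIcc_of_le hab]; exact Icc_subset_Icc ha hbT)).intervalIntegrable

theorem intervalIntegral_norm_le_setIntegral_Icc {E : Type*} [NormedAddCommGroup E]
    {φ : ℝ → E} {T : ℝ} (hφ : IntegrableOn φ (Icc 0 T))
    {a b : ℝ} (ha : 0 ≤ a) (hab : a ≤ b) (hbT : b ≤ T) :
    ∫ σ in a..b, ‖φ σ‖ ≤ ∫ σ in Icc 0 T, ‖φ σ‖ := by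
  rw [intervalIntegral.integral_of_le hab]
  exact setIntegral_mono_set hφ.norm (.of_forall fun _ => norm_nonneg _)
    (Ioc_subset_Icc_self.trans (Icc_subset_Icc ha hbT)).eventuallyLE

section Volterra

variable {E F : Type*} [NormedAddCommGroup E] [NormedSpace ℝ E]
  [NormedAddCommGroup F] [NormedSpace ℝ F]

noncomputable def volterra (K : ℝ → ℝ → E →L[ℝ] F) (φ : ℝ → E) (a : ℝ) : F :=
  ∫ σ in (0 : ℝ)..a, K a σ (φ σ)

theorem IntervalIntegrable.clm_apply_of_continuousOn {K : ℝ → E →L[ℝ] F} {φ : ℝ → E} {a b : ℝ}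
    (hK : ContinuousOn K (uIcc a b)) (hφ : IntervalIntegrable φ volume a b) :
    IntervalIntegrable (fun σ => K σ (φ σ)) volume a b := by
  obtain ⟨C, hC⟩ := isCompact_uIcc.exists_bound_of_continuousOn hK
  rw [intervalIntegrable_iff] at hφ ⊢
  refine (hφ.norm.const_mul C).mono' ?_ ?_
  · exact isBoundedBilinearMap_apply.continuous.comp_aestronglyMeasurable
      (((hK.mono uIoc_subset_uIcc).aestronglyMeasurable measurableSet_uIoc).prodMk
        hφ.aestronglyMeasurable)
  · filter_upwards [ae_restrict_mem measurableSet_uIoc] with σ hσ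
    exact (K σ).le_of_opNorm_le (hC σ (uIoc_subset_uIcc hσ)) _

theorem intervalIntegral.norm_integral_clm_apply_le {K : ℝ → E →L[ℝ] F} {φ : ℝ → E}
    {a b C : ℝ} (hab : a ≤ b) (hK : ∀ σ ∈ Ioc a b, ‖K σ‖ ≤ C)
    (hφ : IntervalIntegrable φ volume a b) :
    ‖∫ σ in a..b, K σ (φ σ)‖ ≤ C * ∫ σ in a..b, ‖φ σ‖ := by
  rw [← intervalIntegral.integral_const_mul]
  exact intervalIntegral.norm_integral_le_of_norm_le hab
    (.of_forall fun σ hσ => (K σ).le_of_opNorm_le (hK σ hσ) _) (hφ.norm.const_mul C)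

variable {K : ℝ → ℝ → E →L[ℝ] F} {φ : ℝ → E} {T M δ h : ℝ}

theorem norm_volterra_le (hK : ∀ a σ, 0 ≤ σ → σ ≤ a → a ≤ T → ‖K a σ‖ ≤ M)
    (hφ : IntegrableOn φ (Icc 0 T)) {a : ℝ} (ha : a ∈ Icc 0 T) :
    ‖volterra K φ a‖ ≤ M * ∫ σ in Icc 0 T, ‖φ σ‖ := by
  have hM : 0 ≤ M := (norm_nonneg _).trans (hK a a ha.1 le_rfl ha.2)
  calc ‖volterra K φ a‖ ≤ M * ∫ σ in (0 : ℝ)..a, ‖φ σ‖ :=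
        intervalIntegral.norm_integral_clm_apply_le ha.1
          (fun σ hσ => hK a σ hσ.1.le hσ.2 ha.2)
          (hφ.intervalIntegrable_of_Icc_subset le_rfl ha.1 ha.2)
    _ ≤ M * ∫ σ in Icc 0 T, ‖φ σ‖ := by
        gcongr
        exact intervalIntegral_norm_le_setIntegral_Icc hφ le_rfl ha.1 ha.2

theorem norm_volterra_add_sub_le (hK_cont : ∀ a, 0 ≤ a → a ≤ T → ContinuousOn (K a) (Icc 0 a))
    (hK_bdd : ∀ a σ, 0 ≤ σ → σ ≤ a → a ≤ T → ‖K a σ‖ ≤ M)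
    (hK_sub : ∀ a σ, 0 ≤ σ → σ ≤ a → a + h ≤ T → ‖K (a + h) σ - K a σ‖ ≤ δ)
    (hδ : 0 ≤ δ) (hh : 0 ≤ h) (hφ : IntegrableOn φ (Icc 0 T)) {a : ℝ} (ha : 0 ≤ a)
    (hahT : a + h ≤ T) :
    ‖volterra K φ (a + h) - volterra K φ a‖ ≤
      δ * (∫ σ in Icc 0 T, ‖φ σ‖) + M * ∫ σ in a..a + h, ‖φ σ‖ := by
  have hint : ∀ b, 0 ≤ b → b ≤ T → ∀ s t, 0 ≤ s → s ≤ t → t ≤ b →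
      IntervalIntegrable (fun σ => K b σ (φ σ)) volume s t := fun b hb hbT s t hs hst htb =>
    .clm_apply_of_continuousOn
      ((hK_cont b hb hbT).mono (by rw [uIcc_of_le hst]; exact Icc_subset_Icc hs htb))
      (hφ.intervalIntegrable_of_Icc_subset hs hst (htb.trans hbT))
  have hsplit : volterra K φ (a + h) - volterra K φ a =
      (∫ σ in (0 : ℝ)..a, (K (a + h) σ - K a σ) (φ σ)) +
        ∫ σ in a..a + h, K (a + h) σ (φ σ) := by
    have h0a := hint (a + h) (by linarith) hahT 0 a le_rfl ha (by linarith)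
    rw [volterra, volterra, ← intervalIntegral.integral_add_adjacent_intervals h0a
      (hint (a + h) (by linarith) hahT a (a + h) ha (by linarith) le_rfl)]
    simp only [sub_apply]
    rw [intervalIntegral.integral_sub h0a (hint a ha (by linarith) 0 a le_rfl ha le_rfl)]
    abel
  rw [hsplit]
  calc _ ≤ ‖∫ σ in (0 : ℝ)..a, (K (a + h) σ - K a σ) (φ σ)‖ +
        ‖∫ σ in a..a + h, K (a + h) σ (φ σ)‖ := norm_add_le _ _
    _ ≤ δ * (∫ σ in (0 : ℝ)..a, ‖φ σ‖) + M * ∫ σ in a..a + h, ‖φ σ‖ :=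
        add_le_add
          (intervalIntegral.norm_integral_clm_apply_le ha
            (fun σ hσ => hK_sub a σ hσ.1.le hσ.2 hahT)
            (hφ.intervalIntegrable_of_Icc_subset le_rfl ha (by linarith)))
          (intervalIntegral.norm_integral_clm_apply_le (by linarith)
            (fun σ hσ => hK_bdd (a + h) σ (by linarith [hσ.1]) hσ.2 hahT)
            (hφ.intervalIntegrable_of_Icc_subset ha (le_add_of_nonneg_right hh) hahT))
    _ ≤ _ := by
        gcongr δ * ?_ + _
        exact intervalIntegral_norm_le_setIntegral_Icc hφ le_rfl ha (by linarith)

theorem norm_indicator_volterra_add_sub_le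
    (hK_cont : ∀ a, 0 ≤ a → a ≤ T → ContinuousOn (K a) (Icc 0 a))
    (hK_bdd : ∀ a σ, 0 ≤ σ → σ ≤ a → a ≤ T → ‖K a σ‖ ≤ M)
    (hK_sub : ∀ a σ, 0 ≤ σ → σ ≤ a → a + h ≤ T → ‖K (a + h) σ - K a σ‖ ≤ δ)
    (hδ : 0 ≤ δ) (hh : 0 ≤ h) (hφ : IntegrableOn φ (Icc 0 T)) {a : ℝ} (ha : a ∈ Icc 0 T) :
    ‖(Icc 0 T).indicator (volterra K φ) (a + h) - (Icc 0 T).indicator (volterra K φ) a‖ ≤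
      δ * (∫ σ in Icc 0 T, ‖φ σ‖) + M * (∫ σ in a..a + h, (Icc 0 T).indicator (‖φ ·‖) σ) +
        M * (∫ σ in Icc 0 T, ‖φ σ‖) * (Ioc (T - h) T).indicator 1 a := by
  have hN : 0 ≤ ∫ σ in Icc 0 T, ‖φ σ‖ :=
    setIntegral_nonneg measurableSet_Icc fun _ _ => norm_nonneg _
  have hM : 0 ≤ M := (norm_nonneg _).trans (hK_bdd a a ha.1 le_rfl ha.2)
  rcases le_or_gt (a + h) T with hahT | hahT
  · rw [indicator_of_mem (show a + h ∈ Icc 0 T from ⟨by linarith [ha.1], hahT⟩),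
      indicator_of_mem ha]
    have hGa : ∫ σ in a..a + h, (Icc 0 T).indicator (‖φ ·‖) σ = ∫ σ in a..a + h, ‖φ σ‖ :=
      intervalIntegral.integral_congr fun σ hσ => indicator_of_mem (by
        rw [uIcc_of_le (le_add_of_nonneg_right hh)] at hσ
        exact ⟨by linarith [ha.1, hσ.1], hσ.2.trans hahT⟩) _
    rw [hGa]
    exact (norm_volterra_add_sub_le hK_cont hK_bdd hK_sub hδ hh hφ ha.1 hahT).trans
      (le_add_of_nonneg_right (mul_nonneg (mul_nonneg hM hN) (indicator_nonneg (by simp) _)))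
  · rw [indicator_of_notMem fun h' => hahT.not_ge h'.2, indicator_of_mem ha, zero_sub, norm_neg,
      indicator_of_mem (show a ∈ Ioc (T - h) T from ⟨by linarith, ha.2⟩), Pi.one_apply, mul_one]
    have hG0 : 0 ≤ ∫ σ in a..a + h, (Icc 0 T).indicator (‖φ ·‖) σ :=
      intervalIntegral.integral_nonneg (le_add_of_nonneg_right hh)
        fun _ _ => indicator_nonneg (fun _ _ => norm_nonneg _) _
    linarith [norm_volterra_le hK_bdd hφ ha, mul_nonneg hδ hN, mul_nonneg hM hG0]

theorem integral_norm_indicator_volterra_add_sub_le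
    (hK_cont : ∀ a, 0 ≤ a → a ≤ T → ContinuousOn (K a) (Icc 0 a))
    (hK_bdd : ∀ a σ, 0 ≤ σ → σ ≤ a → a ≤ T → ‖K a σ‖ ≤ M)
    (hK_sub : ∀ a σ, 0 ≤ σ → σ ≤ a → a + h ≤ T → ‖K (a + h) σ - K a σ‖ ≤ δ)
    (hT : 0 ≤ T) (hδ : 0 ≤ δ) (hh : 0 ≤ h) (hφ : IntegrableOn φ (Icc 0 T)) :
    ∫ a in Icc 0 T, ‖(Icc 0 T).indicator (volterra K φ) (a + h) -
        (Icc 0 T).indicator (volterra K φ) a‖ ≤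
      (T * δ + 2 * M * h) * ∫ σ in Icc 0 T, ‖φ σ‖ := by
  set N := ∫ σ in Icc 0 T, ‖φ σ‖
  set ψ : ℝ → ℝ := (Icc 0 T).indicator (‖φ ·‖)
  set G : ℝ → ℝ := fun a => ∫ σ in a..a + h, ψ σ
  set tail : ℝ → ℝ := (Ioc (T - h) T).indicator 1
  have hψ : Integrable ψ := (integrable_indicator_iff measurableSet_Icc).2 hφ.norm
  have hG_int : IntegrableOn G (Icc 0 T) :=
    (hψ.continuous_intervalIntegral_self_add h).integrableOn_Icc
  have htail_int : Integrable tail :=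
    (integrable_indicator_iff measurableSet_Ioc).2 (integrableOn_const measure_Ioc_lt_top.ne)
  have hG_le : ∫ a in Icc 0 T, G a ≤ h * N := by
    rw [integral_Icc_eq_integral_Ioc, ← intervalIntegral.integral_of_le hT]
    exact (hψ.intervalIntegral_intervalIntegral_self_add_le
      (indicator_nonneg fun _ _ => norm_nonneg _) hh hT).trans_eq
      (by rw [integral_indicator measurableSet_Icc])
  have htail_le : ∫ a in Icc 0 T, tail a ≤ h := by
    refine (setIntegral_le_integral htail_int
      (.of_forall (indicator_nonneg (by simp)))).trans_eq ?_
    rw [integral_indicator_one measurableSet_Ioc, Real.volume_real_Ioc_of_le (by linarith)]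
    ring
  have hM : 0 ≤ M := (norm_nonneg _).trans (hK_bdd 0 0 le_rfl le_rfl hT)
  have hN : 0 ≤ N := setIntegral_nonneg measurableSet_Icc fun _ _ => norm_nonneg _
  have hconst_int : IntegrableOn (fun _ => δ * N) (Icc 0 T) :=
    integrableOn_const measure_Icc_lt_top.ne
  have hhead_int : IntegrableOn (fun a => δ * N + M * G a) (Icc 0 T) :=
    hconst_int.add (hG_int.const_mul M)
  have htail_int' : IntegrableOn (fun a => M * N * tail a) (Icc 0 T) :=
    htail_int.integrableOn.const_mul (M * N)
  calc _ ≤ ∫ a in Icc 0 T, (δ * N + M * G a + M * N * tail a) :=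
        integral_mono_of_nonneg (.of_forall fun _ => norm_nonneg _) (hhead_int.add htail_int')
          ((ae_restrict_iff' measurableSet_Icc).2 (.of_forall fun a ha =>
            norm_indicator_volterra_add_sub_le hK_cont hK_bdd hK_sub hδ hh hφ ha))
    _ = T * (δ * N) + M * (∫ a in Icc 0 T, G a) + M * N * ∫ a in Icc 0 T, tail a := by
        rw [integral_add hhead_int htail_int', integral_add hconst_int (hG_int.const_mul M),
          setIntegral_const, integral_const_mul, integral_const_mul, Real.volume_real_Icc_of_le hT,
          sub_zero, smul_eq_mul]
    _ ≤ T * (δ * N) + M * (h * N) + M * N * h := by gcongr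
    _ = (T * δ + 2 * M * h) * N := by ring

end Volterra

theorem regularized_volterra_equiintegrable_general
    {E₀ : Type*} [NormedAddCommGroup E₀] [NormedSpace ℝ E₀]
    (a_m : ℝ) (ha_m : 0 < a_m)
    (M : ℝ) (hM : 1 ≤ M)
    (P : ℝ → ℝ → E₀ →L[ℝ] E₀)
    -- (E2)
    (hE2 : ContinuousOn (fun p : ℝ × ℝ => P p.1 p.2)
      {p : ℝ × ℝ | 0 ≤ p.2 ∧ p.2 < p.1 ∧ p.1 ≤ 2 * a_m})
    -- (E4)
    (hE4a : ∀ σ a, 0 ≤ σ → σ ≤ a → a ≤ 2 * a_m → ‖P a σ‖ ≤ M)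
    -- fixed μ ∈ (0, a_m]
    (μ : ℝ) (hμ : μ ∈ Set.Ioc (0 : ℝ) a_m) :
    ∀ ε > (0 : ℝ), ∃ η > (0 : ℝ), ∀ h : ℝ, 0 < h → h < η →
      ∀ φ : ℝ → E₀, IntegrableOn φ (Set.Icc (0 : ℝ) a_m) →
        (∫ a in Set.Icc (0 : ℝ) a_m,
          ‖(Set.Icc (0 : ℝ) a_m).indicator
              (fun a' => ∫ σ in (0 : ℝ)..a', P (μ + a') σ (φ σ)) (a + h) -
            (Set.Icc (0 : ℝ) a_m).indicator
              (fun a' => ∫ σ in (0 : ℝ)..a', P (μ + a') σ (φ σ)) a‖) ≤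
          ε * ∫ a in Set.Icc (0 : ℝ) a_m, ‖φ a‖ := by
  obtain ⟨hμ0, hμa⟩ := hμ
  intro ε hε
  obtain ⟨η, hη, hP⟩ := hE2.exists_forall_norm_sub_le_offDiag hμ0 (δ := ε / (2 * a_m))
    (by positivity)
  refine ⟨min η (ε / (4 * M)), by positivity, fun h hh hhη φ hφ => ?_⟩
  have hK_cont : ∀ a, 0 ≤ a → a ≤ a_m → ContinuousOn (P (μ + a)) (Icc 0 a) := fun a _ ha =>
    hE2.comp (Continuous.prodMk_right (μ + a)).continuousOn fun σ hσ =>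
      ⟨hσ.1, by linarith [hσ.2], by linarith⟩
  have hK_bdd : ∀ a σ, 0 ≤ σ → σ ≤ a → a ≤ a_m → ‖P (μ + a) σ‖ ≤ M := fun a σ hσ hσa ha =>
    hE4a σ (μ + a) hσ (by linarith) (by linarith)
  have hK_sub : ∀ a σ, 0 ≤ σ → σ ≤ a → a + h ≤ a_m →
      ‖P (μ + (a + h)) σ - P (μ + a) σ‖ ≤ ε / (2 * a_m) := fun a σ hσ hσa ha => by
    rw [← add_assoc]
    exact hP h hh.le ((hhη.trans_le (min_le_left _ _)).le) (μ + a) σ hσ (by linarith)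
      (by linarith)
  have hMh : M * h ≤ ε / 4 := by
    have := (lt_div_iff₀ (by positivity)).1 (hhη.trans_le (min_le_right _ _))
    linarith
  calc _ ≤ (a_m * (ε / (2 * a_m)) + 2 * M * h) * ∫ a in Icc 0 a_m, ‖φ a‖ :=
        integral_norm_indicator_volterra_add_sub_le (K := fun a σ => P (μ + a) σ) hK_cont hK_bdd
          hK_sub ha_m.le (by positivity) hh.le hφ
    _ ≤ ε * ∫ a in Icc 0 a_m, ‖φ a‖ := by
        gcongr
        have hhalf : a_m * (ε / (2 * a_m)) = ε / 2 := by field_simp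
        linarith

/-- Under (E1)–(E4), the translates of `v_φ^μ` are equi-integrable
uniformly in `φ`: for every fixed `μ ∈ (0, a_m]` and every `ε > 0` there exists `η > 0`
such that for all `h ∈ (0, η)` and all `φ ∈ L¹(J,E₀)`,
`∫₀^{a_m} ‖ṽ_φ^μ(a+h) − ṽ_φ^μ(a)‖ da ≤ ε ‖φ‖_{L¹(J,E₀)}`,
where `ṽ_φ^μ` is the extension of `v_φ^μ` by zero outside `J`. -/
theorem regularized_volterra_equiintegrable
    {E₀ Eϑ : Type*} [NormedAddCommGroup E₀] [NormedSpace ℝ E₀]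
    [NormedAddCommGroup Eϑ] [NormedSpace ℝ Eϑ]
    (ι : Eϑ →L[ℝ] E₀) (hι_inj : Function.Injective ι)
    (hι_cpt : IsCompactOperator (ι : Eϑ →L[ℝ] E₀))
    (a_m : ℝ) (ha_m : 0 < a_m)
    (ϑ : ℝ) (hϑ : ϑ ∈ Set.Ioo (0 : ℝ) 1)
    (M : ℝ) (hM : 1 ≤ M)
    (P : ℝ → ℝ → E₀ →L[ℝ] E₀) (Pθ : ℝ → ℝ → E₀ →L[ℝ] Eϑ)
    -- (E1)
    (hE1a : ∀ a, 0 ≤ a → a ≤ 2 * a_m → P a a = ContinuousLinearMap.id ℝ E₀)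
    (hE1b : ∀ σ ρ a, 0 ≤ σ → σ ≤ ρ → ρ ≤ a → a ≤ 2 * a_m →
      (P a ρ).comp (P ρ σ) = P a σ)
    -- (E2)
    (hE2 : ContinuousOn (fun p : ℝ × ℝ => P p.1 p.2)
      {p : ℝ × ℝ | 0 ≤ p.2 ∧ p.2 < p.1 ∧ p.1 ≤ 2 * a_m})
    -- (E3)
    (hE3 : ∀ σ a, 0 ≤ σ → σ < a → a ≤ 2 * a_m → ι.comp (Pθ a σ) = P a σ)
    -- (E4)
    (hE4a : ∀ σ a, 0 ≤ σ → σ ≤ a → a ≤ 2 * a_m → ‖P a σ‖ ≤ M)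
    (hE4b : ∀ σ a, 0 ≤ σ → σ < a → a ≤ 2 * a_m → (a - σ) ^ ϑ * ‖Pθ a σ‖ ≤ M)
    -- fixed μ ∈ (0, a_m]
    (μ : ℝ) (hμ : μ ∈ Set.Ioc (0 : ℝ) a_m) :
    ∀ ε > (0 : ℝ), ∃ η > (0 : ℝ), ∀ h : ℝ, 0 < h → h < η →
      ∀ φ : ℝ → E₀, IntegrableOn φ (Set.Icc (0 : ℝ) a_m) →
        (∫ a in Set.Icc (0 : ℝ) a_m,
          ‖(Set.Icc (0 : ℝ) a_m).indicator
              (fun a' => ∫ σ in (0 : ℝ)..a', P (μ + a') σ (φ σ)) (a + h) -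
            (Set.Icc (0 : ℝ) a_m).indicator
              (fun a' => ∫ σ in (0 : ℝ)..a', P (μ + a') σ (φ σ)) a‖) ≤
          ε * ∫ a in Set.Icc (0 : ℝ) a_m, ‖φ a‖ :=
  regularized_volterra_equiintegrable_general a_m ha_m M hM P hE2 hE4a μ hμ
end

section
/- Under hypotheses (E1)–(E4), the regularized operators converge to the Volterra operator uniformly on bounded sets as μ → 0: for every ε > 0 there exists μ₀ ∈ (0, a_m] such that for all μ ∈ (0, μ₀) and all φ ∈ L¹(J,E₀), ‖v_φ^μ − u_φ‖_{L¹(J,E₀)} ≤ ε ‖φ‖_{L¹(J,E₀)}. -/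
/-!
Write `v_φ^μ(a) - u_φ(a) = ∫₀^a k_μ(a,σ) φ(σ) dσ` with `k_μ(a,σ) = Π(μ+a,σ) - Π(a,σ)`. At distance
at least `δ` from the diagonal the points `(μ+a,σ)` and `(a,σ)` lie in a compact set on which `Π` is
uniformly continuous, so `‖k_μ(a,σ)‖ ≤ ε'` once `μ` is small; near the diagonal only
`‖k_μ(a,σ)‖ ≤ 2M` is available. Hence `‖k_μ(a,σ)‖ ≤ g(a-σ)` with
`g = ε' 𝟙_[0,a_m] + 2M 𝟙_[0,δ)`, and Young's inequality for the convolution `‖φ‖ ⋆ g` bounds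
`‖v_φ^μ - u_φ‖_{L¹}` by `(a_m ε' + 2Mδ) ‖φ‖_{L¹}`, which is `ε ‖φ‖_{L¹}` for suitable `ε'` and `δ`.
-/

open MeasureTheory Set Filter Topology

open scoped Convolution

theorem IntegrableOn.continuousLinearMap_apply_of_continuousOn
    {α E F : Type*} [TopologicalSpace α] [SecondCountableTopology α] [MeasurableSpace α]
    [OpensMeasurableSpace α] {μ : Measure α}
    [NormedAddCommGroup E] [NormedSpace ℝ E] [NormedAddCommGroup F] [NormedSpace ℝ F]
    {K : α → E →L[ℝ] F} {φ : α → E} {s : Set α} {C : ℝ} (hs : MeasurableSet s)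
    (hK : ContinuousOn K s) (hKC : ∀ x ∈ s, ‖K x‖ ≤ C) (hφ : IntegrableOn φ s μ) :
    IntegrableOn (fun x => K x (φ x)) s μ := by
  refine Integrable.mono' (hφ.norm.const_mul C) ?_ ?_
  · exact isBoundedBilinearMap_apply.continuous.comp_aestronglyMeasurable
      ((hK.aestronglyMeasurable hs).prodMk hφ.aestronglyMeasurable)
  · filter_upwards [ae_restrict_mem hs] with x hx
    exact (K x).le_of_opNorm_le (hKC x hx) _

theorem intervalIntegrable_apply_of_continuousOn_offDiag
    {E F : Type*} [NormedAddCommGroup E] [NormedSpace ℝ E] [NormedAddCommGroup F] [NormedSpace ℝ F]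
    {P : ℝ → ℝ → E →L[ℝ] F} {φ : ℝ → E} {T M a t : ℝ}
    (hP : ContinuousOn (fun p : ℝ × ℝ => P p.1 p.2) {p | 0 ≤ p.2 ∧ p.2 < p.1 ∧ p.1 ≤ T})
    (hPM : ∀ σ a, 0 ≤ σ → σ ≤ a → a ≤ T → ‖P a σ‖ ≤ M)
    (ha : 0 ≤ a) (hat : a ≤ t) (htT : t ≤ T) (hφ : IntegrableOn φ (Ioc 0 a)) :
    IntervalIntegrable (fun σ => P t σ (φ σ)) volume 0 a :=
  (intervalIntegrable_iff_integrableOn_Ioo_of_le ha).2 <|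
    IntegrableOn.continuousLinearMap_apply_of_continuousOn measurableSet_Ioo
      (hP.comp (continuous_const.prodMk continuous_id).continuousOn
        fun σ hσ => ⟨hσ.1.le, hσ.2.trans_le hat, htT⟩)
      (fun σ hσ => hPM σ t hσ.1.le (hσ.2.le.trans hat) htT)
      (hφ.mono_set Ioo_subset_Ioc_self)

theorem exists_pos_dist_shift_fst_lt_of_continuousOn {X : Type*} [PseudoMetricSpace X]
    {f : ℝ × ℝ → X} {T δ ε : ℝ} (hf : ContinuousOn f {p | 0 ≤ p.2 ∧ p.2 < p.1 ∧ p.1 ≤ T})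
    (hδ : 0 < δ) (hε : 0 < ε) :
    ∃ η > 0, ∀ μ a σ, 0 ≤ μ → μ < η → 0 ≤ σ → σ + δ ≤ a → μ + a ≤ T →
      dist (f (μ + a, σ)) (f (a, σ)) < ε := by
  set K : Set (ℝ × ℝ) := (Icc 0 T ×ˢ Icc 0 T) ∩ {p | p.2 + δ ≤ p.1}
  have hK : IsCompact K := (isCompact_Icc.prod isCompact_Icc).inter_right
    (isClosed_le (continuous_snd.add continuous_const) continuous_fst)
  have hKsub : K ⊆ {p | 0 ≤ p.2 ∧ p.2 < p.1 ∧ p.1 ≤ T} := fun p ⟨⟨h1, h2⟩, h3⟩ =>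
    ⟨h2.1, by linarith [show p.2 + δ ≤ p.1 from h3], h1.2⟩
  obtain ⟨η, hη, hclose⟩ :=
    Metric.uniformContinuousOn_iff.1 (hK.uniformContinuousOn_of_continuous (hf.mono hKsub)) ε hε
  refine ⟨η, hη, fun μ a σ hμ hμη hσ hσa haT => hclose _ ?_ _ ?_ ?_⟩
  · exact ⟨⟨⟨by linarith, haT⟩, hσ, by linarith⟩, show σ + δ ≤ μ + a by linarith⟩
  · exact ⟨⟨⟨by linarith, by linarith⟩, hσ, by linarith⟩, hσa⟩
  · rwa [Prod.dist_eq, dist_self, Real.dist_eq, add_sub_cancel_right, abs_of_nonneg hμ,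
      max_eq_left hμ]

theorem setIntegral_norm_volterra_le_of_convolution_bound
    {E F : Type*} [NormedAddCommGroup E] [NormedSpace ℝ E] [NormedAddCommGroup F] [NormedSpace ℝ F]
    {k : ℝ → ℝ → E →L[ℝ] F} {g : ℝ → ℝ} {φ : ℝ → E} {T : ℝ}
    (hg : Integrable g) (hg0 : 0 ≤ g) (hk : ∀ a ∈ Icc 0 T, ∀ σ ∈ Ioc 0 a, ‖k a σ‖ ≤ g (a - σ))
    (hφ : IntegrableOn φ (Icc 0 T)) :
    ∫ a in Icc 0 T, ‖∫ σ in 0..a, k a σ (φ σ)‖ ≤ (∫ t, g t) * ∫ a in Icc 0 T, ‖φ a‖ := by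
  set h : ℝ → ℝ := (Icc 0 T).indicator fun σ => ‖φ σ‖
  have hh : Integrable h := (integrable_indicator_iff measurableSet_Icc).2 hφ.norm
  have hh0 : 0 ≤ h := indicator_nonneg fun σ _ => norm_nonneg _
  set ψ : ℝ → ℝ := h ⋆[ContinuousLinearMap.mul ℝ ℝ] g with hψ
  have hψ0 : 0 ≤ ψ := fun a => integral_nonneg fun σ => mul_nonneg (hh0 σ) (hg0 _)
  have hψ_int : Integrable ψ := hh.integrable_convolution _ hg
  have hpointwise : ∀ a ∈ Icc 0 T, Integrable (fun σ => h σ * g (a - σ)) →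
      ‖∫ σ in 0..a, k a σ (φ σ)‖ ≤ ψ a := by
    intro a ha hint
    rw [intervalIntegral.integral_of_le ha.1]
    calc ‖∫ σ in Ioc 0 a, k a σ (φ σ)‖
        ≤ ∫ σ in Ioc 0 a, h σ * g (a - σ) := by
          refine norm_integral_le_of_norm_le hint.integrableOn ?_
          filter_upwards [ae_restrict_mem measurableSet_Ioc] with σ hσ
          rw [show h σ = ‖φ σ‖ from indicator_of_mem (mem_Icc.2 ⟨hσ.1.le, hσ.2.trans ha.2⟩) _,
            mul_comm]
          exact (k a σ).le_of_opNorm_le (hk a ha σ hσ) _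
      _ ≤ ∫ σ, h σ * g (a - σ) :=
          setIntegral_le_integral hint (Eventually.of_forall fun σ => mul_nonneg (hh0 σ) (hg0 _))
  calc ∫ a in Icc 0 T, ‖∫ σ in 0..a, k a σ (φ σ)‖
      ≤ ∫ a in Icc 0 T, ψ a := by
        refine integral_mono_of_nonneg (Eventually.of_forall fun a => norm_nonneg _)
          hψ_int.integrableOn ?_
        filter_upwards [ae_restrict_mem measurableSet_Icc,
          ae_restrict_of_ae (hh.ae_convolution_exists (ContinuousLinearMap.mul ℝ ℝ) hg)]
          with a ha hint
        exact hpointwise a ha hint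
    _ ≤ ∫ a, ψ a := setIntegral_le_integral hψ_int (Eventually.of_forall hψ0)
    _ = (∫ t, g t) * ∫ a in Icc 0 T, ‖φ a‖ := by
        rw [hψ, integral_convolution _ hh hg, integral_indicator measurableSet_Icc, mul_comm]
        rfl

theorem setIntegral_norm_volterra_le_of_near_far
    {E F : Type*} [NormedAddCommGroup E] [NormedSpace ℝ E] [NormedAddCommGroup F] [NormedSpace ℝ F]
    {k : ℝ → ℝ → E →L[ℝ] F} {φ : ℝ → E} {T δ C ε : ℝ}
    (hT : 0 ≤ T) (hδ : 0 ≤ δ) (hC : 0 ≤ C) (hε : 0 ≤ ε)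
    (hnear : ∀ a ∈ Icc 0 T, ∀ σ ∈ Ioc 0 a, ‖k a σ‖ ≤ C)
    (hfar : ∀ a ∈ Icc 0 T, ∀ σ ∈ Ioc 0 a, σ + δ ≤ a → ‖k a σ‖ ≤ ε)
    (hφ : IntegrableOn φ (Icc 0 T)) :
    ∫ a in Icc 0 T, ‖∫ σ in 0..a, k a σ (φ σ)‖ ≤ (T * ε + δ * C) * ∫ a in Icc 0 T, ‖φ a‖ := by
  have hfar_int : Integrable ((Icc 0 T).indicator fun _ => ε) :=
    (integrable_indicator_iff measurableSet_Icc).2 (integrableOn_const measure_Icc_lt_top.ne)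
  have hnear_int : Integrable ((Ico 0 δ).indicator fun _ => C) :=
    (integrable_indicator_iff measurableSet_Ico).2 (integrableOn_const measure_Ico_lt_top.ne)
  set g : ℝ → ℝ := (Icc 0 T).indicator (fun _ => ε) + (Ico 0 δ).indicator (fun _ => C)
  have hg0 : 0 ≤ g := fun t =>
    add_nonneg (indicator_nonneg (fun _ _ => hε) t) (indicator_nonneg (fun _ _ => hC) t)
  have hkg : ∀ a ∈ Icc 0 T, ∀ σ ∈ Ioc 0 a, ‖k a σ‖ ≤ g (a - σ) := by
    intro a ha σ hσ
    have hmem : a - σ ∈ Icc 0 T := ⟨by linarith [hσ.2], by linarith [hσ.1, ha.2]⟩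
    rcases lt_or_ge (a - σ) δ with hclose | hfar_off
    · calc ‖k a σ‖ ≤ C := hnear a ha σ hσ
        _ = (Ico 0 δ).indicator (fun _ => C) (a - σ) :=
          (indicator_of_mem (mem_Ico.2 ⟨hmem.1, hclose⟩) (fun _ => C)).symm
        _ ≤ g (a - σ) := le_add_of_nonneg_left (indicator_nonneg (fun _ _ => hε) _)
    · calc ‖k a σ‖ ≤ ε := hfar a ha σ hσ (by linarith)
        _ = (Icc 0 T).indicator (fun _ => ε) (a - σ) :=
          (indicator_of_mem hmem (fun _ => ε)).symm
        _ ≤ g (a - σ) := le_add_of_nonneg_right (indicator_nonneg (fun _ _ => hC) _)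
  have hg_int : ∫ t, g t = T * ε + δ * C := by
    rw [integral_add' hfar_int hnear_int, integral_indicator_const _ measurableSet_Icc,
      integral_indicator_const _ measurableSet_Ico, Real.volume_real_Icc_of_le hT,
      Real.volume_real_Ico_of_le hδ, smul_eq_mul, smul_eq_mul, sub_zero, sub_zero]
  calc _ ≤ (∫ t, g t) * ∫ a in Icc 0 T, ‖φ a‖ :=
        setIntegral_norm_volterra_le_of_convolution_bound (hfar_int.add hnear_int) hg0 hkg hφ
    _ = _ := by rw [hg_int]

theorem regularized_volterra_converges_general
    {E₀ : Type*} [NormedAddCommGroup E₀] [NormedSpace ℝ E₀]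
    (a_m : ℝ) (ha_m : 0 < a_m)
    (M : ℝ) (hM : 1 ≤ M)
    (P : ℝ → ℝ → E₀ →L[ℝ] E₀)
    -- (E2)
    (hE2 : ContinuousOn (fun p : ℝ × ℝ => P p.1 p.2)
      {p : ℝ × ℝ | 0 ≤ p.2 ∧ p.2 < p.1 ∧ p.1 ≤ 2 * a_m})
    -- (E4)
    (hE4a : ∀ σ a, 0 ≤ σ → σ ≤ a → a ≤ 2 * a_m → ‖P a σ‖ ≤ M) :
    ∀ ε > (0 : ℝ), ∃ μ₀ ∈ Set.Ioc (0 : ℝ) a_m, ∀ μ : ℝ, 0 < μ → μ < μ₀ →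
      ∀ φ : ℝ → E₀, IntegrableOn φ (Set.Icc (0 : ℝ) a_m) →
        (∫ a in Set.Icc (0 : ℝ) a_m,
          ‖(∫ σ in (0 : ℝ)..a, P (μ + a) σ (φ σ)) - ∫ σ in (0 : ℝ)..a, P a σ (φ σ)‖) ≤
          ε * ∫ a in Set.Icc (0 : ℝ) a_m, ‖φ a‖ := by
  intro ε hε
  have hM0 : 0 < M := by linarith
  obtain ⟨η, hη, hshift⟩ := exists_pos_dist_shift_fst_lt_of_continuousOn hE2
    (δ := ε / (4 * M)) (ε := ε / (2 * a_m)) (by positivity) (by positivity)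
  refine ⟨min η a_m, ⟨lt_min hη ha_m, min_le_right _ _⟩, fun μ hμ hμ₀ φ hφ => ?_⟩
  have hμη : μ < η := hμ₀.trans_le (min_le_left _ _)
  have hμa : μ ≤ a_m := (hμ₀.trans_le (min_le_right _ _)).le
  have hnear : ∀ a ∈ Icc 0 a_m, ∀ σ ∈ Ioc 0 a, ‖P (μ + a) σ - P a σ‖ ≤ 2 * M :=
    fun a ha σ hσ => (norm_sub_le _ _).trans <| by
      linarith [hE4a σ (μ + a) hσ.1.le (by linarith [hσ.2]) (by linarith [ha.2]),
        hE4a σ a hσ.1.le hσ.2 (by linarith [ha.2])]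
  have hfar : ∀ a ∈ Icc 0 a_m, ∀ σ ∈ Ioc 0 a, σ + ε / (4 * M) ≤ a →
      ‖P (μ + a) σ - P a σ‖ ≤ ε / (2 * a_m) := fun a ha σ hσ hσa => by
    simpa only [dist_eq_norm] using
      (hshift μ a σ hμ.le hμη hσ.1.le hσa (by linarith [ha.2])).le
  calc _ = ∫ a in Icc 0 a_m, ‖∫ σ in 0..a, (P (μ + a) σ - P a σ) (φ σ)‖ := by
        refine setIntegral_congr_fun measurableSet_Icc fun a ha => ?_
        have hφa : IntegrableOn φ (Ioc 0 a) := hφ.mono_set (Ioc_subset_Icc_self.trans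
          (Icc_subset_Icc le_rfl ha.2))
        rw [← intervalIntegral.integral_sub
          (intervalIntegrable_apply_of_continuousOn_offDiag hE2 hE4a ha.1 (by linarith [ha.1])
            (by linarith [ha.2]) hφa)
          (intervalIntegrable_apply_of_continuousOn_offDiag hE2 hE4a ha.1 le_rfl
            (by linarith [ha.2]) hφa)]
        rfl
    _ ≤ (a_m * (ε / (2 * a_m)) + ε / (4 * M) * (2 * M)) * ∫ a in Icc 0 a_m, ‖φ a‖ :=
        setIntegral_norm_volterra_le_of_near_far ha_m.le (by positivity) (by positivity)
          (by positivity) hnear hfar hφ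
    _ = ε * ∫ a in Icc 0 a_m, ‖φ a‖ := by
        congr 1
        field_simp
        ring

/-- Under (E1)–(E4), the regularized operators converge to the Volterra
operator uniformly on bounded sets as `μ → 0`: for every `ε > 0` there exists
`μ₀ ∈ (0, a_m]` such that for all `μ ∈ (0, μ₀)` and all `φ ∈ L¹(J,E₀)`,
`‖v_φ^μ − u_φ‖_{L¹(J,E₀)} ≤ ε ‖φ‖_{L¹(J,E₀)}`. -/
theorem regularized_volterra_converges
    {E₀ Eϑ : Type*} [NormedAddCommGroup E₀] [NormedSpace ℝ E₀]
    [NormedAddCommGroup Eϑ] [NormedSpace ℝ Eϑ]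
    (ι : Eϑ →L[ℝ] E₀) (hι_inj : Function.Injective ι)
    (hι_cpt : IsCompactOperator (ι : Eϑ →L[ℝ] E₀))
    (a_m : ℝ) (ha_m : 0 < a_m)
    (ϑ : ℝ) (hϑ : ϑ ∈ Set.Ioo (0 : ℝ) 1)
    (M : ℝ) (hM : 1 ≤ M)
    (P : ℝ → ℝ → E₀ →L[ℝ] E₀) (Pθ : ℝ → ℝ → E₀ →L[ℝ] Eϑ)
    -- (E1)
    (hE1a : ∀ a, 0 ≤ a → a ≤ 2 * a_m → P a a = ContinuousLinearMap.id ℝ E₀)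
    (hE1b : ∀ σ ρ a, 0 ≤ σ → σ ≤ ρ → ρ ≤ a → a ≤ 2 * a_m →
      (P a ρ).comp (P ρ σ) = P a σ)
    -- (E2)
    (hE2 : ContinuousOn (fun p : ℝ × ℝ => P p.1 p.2)
      {p : ℝ × ℝ | 0 ≤ p.2 ∧ p.2 < p.1 ∧ p.1 ≤ 2 * a_m})
    -- (E3)
    (hE3 : ∀ σ a, 0 ≤ σ → σ < a → a ≤ 2 * a_m → ι.comp (Pθ a σ) = P a σ)
    -- (E4)
    (hE4a : ∀ σ a, 0 ≤ σ → σ ≤ a → a ≤ 2 * a_m → ‖P a σ‖ ≤ M)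
    (hE4b : ∀ σ a, 0 ≤ σ → σ < a → a ≤ 2 * a_m → (a - σ) ^ ϑ * ‖Pθ a σ‖ ≤ M) :
    ∀ ε > (0 : ℝ), ∃ μ₀ ∈ Set.Ioc (0 : ℝ) a_m, ∀ μ : ℝ, 0 < μ → μ < μ₀ →
      ∀ φ : ℝ → E₀, IntegrableOn φ (Set.Icc (0 : ℝ) a_m) →
        (∫ a in Set.Icc (0 : ℝ) a_m,
          ‖(∫ σ in (0 : ℝ)..a, P (μ + a) σ (φ σ)) - ∫ σ in (0 : ℝ)..a, P a σ (φ σ)‖) ≤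
          ε * ∫ a in Set.Icc (0 : ℝ) a_m, ‖φ a‖ :=
  regularized_volterra_converges_general a_m ha_m M hM P hE2 hE4a
end

section
/- Under hypotheses (E1)–(E4), for every fixed μ ∈ (0, a_m] the linear operator V^μ : L¹(J,E₀) → L¹(J,E₀) defined by (V^μ φ)(a) := v_φ^μ(a) = ∫₀^a Π(μ+a,σ)φ(σ) dσ is compact; that is, for every bounded sequence (φ_j) in L¹(J,E₀) the set {v_{φ_j}^μ : j ∈ ℕ} is relatively compact in L¹(J,E₀). -/
open MeasureTheory Set Filter Topology

/-!
`V^μ` is the integral operator on `L¹(0, a_m)` with kernel `1_{σ ≤ a} K (a, σ)`, where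
`K (a, σ) = Π (μ + a) σ`. Since `μ > 0`, the point `(μ + a, σ)` stays off the diagonal, so `K` is
continuous on the closed triangle `0 ≤ σ ≤ a ≤ a_m` by (E2), and every `K (a, σ) = ι ∘ Πϑ (μ + a) σ`
is compact by (E3).

The `L¹ → L¹` norm of a kernel operator is at most `sup_σ ∫ ‖k (a, σ)‖ da`. On a grid of mesh `h`,
replace `K` on each cell strictly below the diagonal by its value at a corner of the cell, and by `0`
on the diagonal cells. By uniform continuity the error is `≤ ε` off the diagonal, and for each `σ`
the diagonal cells meet only an interval of length `h` in `a`, so the step operator is within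
`ε a_m + h sup ‖K‖` of `V^μ`. A step kernel with compact values yields a finite sum of operators
`φ ↦ 1_A • L (∫_B φ)` with `L` compact, and compact operators are closed in operator norm.
-/

noncomputable section

theorem IsCompactOperator.isCompact_closure_range_apply_of_norm_le {X Y ι : Type*}
    [NormedAddCommGroup X] [NormedSpace ℝ X] [NormedAddCommGroup Y] [NormedSpace ℝ Y]
    {T : X →L[ℝ] Y} (hT : IsCompactOperator T) {φ : ι → X} {C : ℝ} (hC : ∀ j, ‖φ j‖ ≤ C) :
    IsCompact (closure (range fun j => T (φ j))) := by
  rw [← image_univ, ← image_image]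
  exact hT.isCompact_closure_image_of_bounded (𝕜₁ := ℝ) (f := (T : X →ₗ[ℝ] Y))
    (isBounded_iff_forall_norm_le.2 ⟨C, forall_mem_image.2 fun j _ => hC j⟩)

namespace MeasureTheory

variable {α E : Type*} [MeasurableSpace α] {ν : Measure α} [NormedAddCommGroup E]

theorem Lp.coeFn_finset_sum {p : ENNReal} {ι : Type*} (s : Finset ι) (f : ι → Lp E p ν) :
    ⇑(∑ i ∈ s, f i) =ᵐ[ν] ∑ i ∈ s, ⇑(f i) := by
  classical
  induction s using Finset.induction_on with
  | empty => simpa using Lp.coeFn_zero E p ν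
  | insert i s hi ih =>
    simp only [Finset.sum_insert hi]
    exact (Lp.coeFn_add _ _).trans (EventuallyEq.rfl.add ih)

variable [NormedSpace ℝ E]

theorem indicatorConstLp_smul {p : ENNReal} {s : Set α} (hs : MeasurableSet s) (hνs : ν s ≠ ⊤)
    (c : ℝ) (x : E) :
    indicatorConstLp p hs hνs (c • x) = c • indicatorConstLp p hs hνs x := by
  rw [indicatorConstLp, indicatorConstLp, ← MemLp.toLp_const_smul]
  congr 1
  ext a
  by_cases ha : a ∈ s <;> simp [ha]

variable (ν) in
def indicatorConstLpCLM (p : ENNReal) [Fact (1 ≤ p)] {s : Set α} (hs : MeasurableSet s)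
    (hνs : ν s ≠ ⊤) : E →L[ℝ] Lp E p ν :=
  LinearMap.mkContinuous
    { toFun := indicatorConstLp p hs hνs
      map_add' := fun _ _ => indicatorConstLp_add.symm
      map_smul' := indicatorConstLp_smul hs hνs }
    (ν.real s ^ (1 / p.toReal)) fun x =>
      (norm_indicatorConstLp_le (hs := hs) (hμs := hνs) (c := x)).trans_eq (mul_comm _ _)

theorem indicatorConstLpCLM_apply (p : ENNReal) [Fact (1 ≤ p)] {s : Set α} (hs : MeasurableSet s)
    (hνs : ν s ≠ ⊤) (x : E) :
    indicatorConstLpCLM ν p hs hνs x = indicatorConstLp p hs hνs x := rfl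

variable (ν) in
def setIntegralL1CLM (s : Set α) : Lp E 1 ν →L[ℝ] E where
  toFun φ := ∫ x in s, φ x ∂ν
  map_add' φ ψ := by
    rw [← integral_add (L1.integrable_coeFn φ).restrict (L1.integrable_coeFn ψ).restrict]
    exact integral_congr_ae (ae_restrict_of_ae (Lp.coeFn_add φ ψ))
  map_smul' c φ := by
    rw [RingHom.id_apply, ← integral_smul]
    exact integral_congr_ae (ae_restrict_of_ae (Lp.coeFn_smul c φ))
  cont := continuous_setIntegral s

theorem setIntegralL1CLM_apply (s : Set α) (φ : Lp E 1 ν) :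
    setIntegralL1CLM ν s φ = ∫ x in s, φ x ∂ν := rfl

theorem integral_apply_eq_sum_setIntegral_fiber [CompleteSpace E] {ι : Type*}
    [MeasurableSpace ι] [MeasurableSingletonClass ι] {d : α → ι} (hd : Measurable d)
    {s : Finset ι} (hds : ∀ σ, d σ ∈ s) (L : ι → E →L[ℝ] E) {f : α → E} (hf : Integrable f ν) :
    ∫ σ, L (d σ) (f σ) ∂ν = ∑ j ∈ s, L j (∫ σ in d ⁻¹' {j}, f σ ∂ν) := by
  classical
  have hfib : ∀ j, MeasurableSet (d ⁻¹' {j}) := fun j => hd (measurableSet_singleton j)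
  calc ∫ σ, L (d σ) (f σ) ∂ν
      = ∫ σ, ∑ j ∈ s, (d ⁻¹' {j}).indicator (fun σ => L j (f σ)) σ ∂ν := by
        refine integral_congr_ae (ae_of_all _ fun σ => ?_)
        simp only [indicator_apply, mem_preimage, mem_singleton_iff]
        rw [Finset.sum_ite_eq, if_pos (hds σ)]
    _ = ∑ j ∈ s, L j (∫ σ in d ⁻¹' {j}, f σ ∂ν) := by
        rw [integral_finsetSum _ fun j _ => ((L j).integrable_comp hf).indicator (hfib j)]
        simp_rw [integral_indicator (hfib _), (L _).integral_comp_comm hf.integrableOn]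

section KernelOperator

variable {k : α × α → E →L[ℝ] E} {f g : α → E}

variable (ν) in
def kernelIntegral (k : α × α → E →L[ℝ] E) (f : α → E) (a : α) : E :=
  ∫ σ, k (a, σ) (f σ) ∂ν

theorem kernelIntegral_congr_ae (h : f =ᵐ[ν] g) : kernelIntegral ν k f = kernelIntegral ν k g :=
  funext fun _ => integral_congr_ae (h.mono fun _ hσ => congrArg _ hσ)

theorem kernelIntegral_smul (c : ℝ) : kernelIntegral ν k (c • f) = c • kernelIntegral ν k f :=
  funext fun _ => by simp only [kernelIntegral, Pi.smul_apply, map_smul, integral_smul]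

variable [IsFiniteMeasure ν]

theorem integrable_norm_kernel_mul_norm (hk : AEStronglyMeasurable k (ν.prod ν))
    (hkb : ∃ B, ∀ p, ‖k p‖ ≤ B) (hf : Integrable f ν) :
    Integrable (fun p : α × α => ‖k p‖ * ‖f p.2‖) (ν.prod ν) := by
  obtain ⟨B, hB⟩ := hkb
  have hf₂ := hf.norm.comp_snd ν
  refine (hf₂.const_mul B).mono' (hk.norm.mul hf₂.1) (Eventually.of_forall fun p => ?_)
  rw [norm_mul, norm_norm, norm_norm]
  exact mul_le_mul_of_nonneg_right (hB p) (norm_nonneg _)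

theorem integrable_kernel_apply (hk : AEStronglyMeasurable k (ν.prod ν))
    (hkb : ∃ B, ∀ p, ‖k p‖ ≤ B) (hf : Integrable f ν) :
    Integrable (fun p : α × α => k p (f p.2)) (ν.prod ν) :=
  (integrable_norm_kernel_mul_norm hk hkb hf).mono'
    (isBoundedBilinearMap_apply.continuous.comp_aestronglyMeasurable
      (hk.prodMk (hf.1.comp_snd)))
    (Eventually.of_forall fun p => (k p).le_opNorm _)

theorem integrable_kernelIntegral (hk : AEStronglyMeasurable k (ν.prod ν))
    (hkb : ∃ B, ∀ p, ‖k p‖ ≤ B) (hf : Integrable f ν) : Integrable (kernelIntegral ν k f) ν :=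
  (integrable_kernel_apply hk hkb hf).integral_prod_left

theorem integral_norm_kernelIntegral_le (hk : AEStronglyMeasurable k (ν.prod ν))
    (hkb : ∃ B, ∀ p, ‖k p‖ ≤ B) {C : ℝ} (hC : ∀ᵐ σ ∂ν, ∫ a, ‖k (a, σ)‖ ∂ν ≤ C)
    (hf : Integrable f ν) :
    ∫ a, ‖kernelIntegral ν k f a‖ ∂ν ≤ C * ∫ σ, ‖f σ‖ ∂ν := by
  have hprod := integrable_norm_kernel_mul_norm hk hkb hf
  calc ∫ a, ‖kernelIntegral ν k f a‖ ∂ν ≤ ∫ a, ∫ σ, ‖k (a, σ)‖ * ‖f σ‖ ∂ν ∂ν := by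
        refine integral_mono_ae (integrable_kernelIntegral hk hkb hf).norm
          hprod.integral_prod_left ?_
        filter_upwards [hprod.prod_right_ae] with a ha
        exact norm_integral_le_of_norm_le ha (Eventually.of_forall fun σ => (k _).le_opNorm _)
    _ = ∫ σ, (∫ a, ‖k (a, σ)‖ ∂ν) * ‖f σ‖ ∂ν := by
        simp_rw [integral_integral_swap (f := fun a σ => ‖k (a, σ)‖ * ‖f σ‖) hprod,
          integral_mul_const]
    _ ≤ ∫ σ, C * ‖f σ‖ ∂ν := by
        refine integral_mono_ae ?_ (hf.norm.const_mul C)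
          (hC.mono fun σ hσ => mul_le_mul_of_nonneg_right hσ (norm_nonneg _))
        simpa only [integral_mul_const] using hprod.integral_prod_right
    _ = C * ∫ σ, ‖f σ‖ ∂ν := integral_const_mul C _

theorem kernelIntegral_add_ae (hk : AEStronglyMeasurable k (ν.prod ν))
    (hkb : ∃ B, ∀ p, ‖k p‖ ≤ B) (hf : Integrable f ν) (hg : Integrable g ν) :
    kernelIntegral ν k (f + g) =ᵐ[ν] kernelIntegral ν k f + kernelIntegral ν k g := by
  filter_upwards [(integrable_kernel_apply hk hkb hf).prod_right_ae,
    (integrable_kernel_apply hk hkb hg).prod_right_ae] with a hfa hga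
  simp only [kernelIntegral, Pi.add_apply, map_add]
  exact integral_add hfa hga

variable (ν) in
def kernelOpL1 (k : α × α → E →L[ℝ] E) (hk : AEStronglyMeasurable k (ν.prod ν))
    (hkb : ∃ B, ∀ p, ‖k p‖ ≤ B) : Lp E 1 ν →L[ℝ] Lp E 1 ν :=
  LinearMap.mkContinuousOfExistsBound
    { toFun := fun φ => (integrable_kernelIntegral hk hkb (L1.integrable_coeFn φ)).toL1 _
      map_add' := fun φ ψ => by
        rw [← Integrable.toL1_add, Integrable.toL1_eq_toL1_iff,
          kernelIntegral_congr_ae (Lp.coeFn_add φ ψ)]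
        exact kernelIntegral_add_ae hk hkb (L1.integrable_coeFn φ) (L1.integrable_coeFn ψ)
      map_smul' := fun c φ => by
        rw [RingHom.id_apply, ← Integrable.toL1_smul, Integrable.toL1_eq_toL1_iff,
          kernelIntegral_congr_ae (Lp.coeFn_smul c φ), kernelIntegral_smul]
        rfl }
    (by
      obtain ⟨B, hB⟩ := hkb
      refine ⟨B * ν.real univ, fun φ => ?_⟩
      refine (L1.norm_of_fun_eq_integral_norm
        (integrable_kernelIntegral hk ⟨B, hB⟩ (L1.integrable_coeFn φ))).trans_le ?_
      rw [L1.norm_eq_integral_norm]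
      refine integral_norm_kernelIntegral_le hk ⟨B, hB⟩ (ae_of_all _ fun σ => ?_)
        (L1.integrable_coeFn φ)
      exact (Real.le_norm_self _).trans
        (norm_integral_le_of_norm_le_const (ae_of_all _ fun a => (norm_norm _).trans_le (hB _))))

variable {hk : AEStronglyMeasurable k (ν.prod ν)} {hkb : ∃ B, ∀ p, ‖k p‖ ≤ B}

theorem coeFn_kernelOpL1 (φ : Lp E 1 ν) : kernelOpL1 ν k hk hkb φ =ᵐ[ν] kernelIntegral ν k φ :=
  Integrable.coeFn_toL1 (integrable_kernelIntegral hk hkb (L1.integrable_coeFn φ))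

theorem norm_kernelOpL1_le {C : ℝ} (hC0 : 0 ≤ C) (hC : ∀ᵐ σ ∂ν, ∫ a, ‖k (a, σ)‖ ∂ν ≤ C) :
    ‖kernelOpL1 ν k hk hkb‖ ≤ C := by
  refine ContinuousLinearMap.opNorm_le_bound _ hC0 fun φ => ?_
  rw [L1.norm_eq_integral_norm, L1.norm_eq_integral_norm]
  refine (integral_congr_ae ((coeFn_kernelOpL1 φ).mono fun _ ha => congrArg norm ha)).trans_le ?_
  exact integral_norm_kernelIntegral_le hk hkb hC (L1.integrable_coeFn φ)

theorem kernelOpL1_sub {k₁ k₂ : α × α → E →L[ℝ] E} {hk₁ : AEStronglyMeasurable k₁ (ν.prod ν)}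
    {hkb₁ : ∃ B, ∀ p, ‖k₁ p‖ ≤ B} {hk₂ : AEStronglyMeasurable k₂ (ν.prod ν)}
    {hkb₂ : ∃ B, ∀ p, ‖k₂ p‖ ≤ B} {hk : AEStronglyMeasurable (k₁ - k₂) (ν.prod ν)}
    {hkb : ∃ B, ∀ p, ‖(k₁ - k₂) p‖ ≤ B} :
    kernelOpL1 ν k₁ hk₁ hkb₁ - kernelOpL1 ν k₂ hk₂ hkb₂ = kernelOpL1 ν (k₁ - k₂) hk hkb := by
  ext1 φ
  refine Lp.ext ?_
  have hφ := L1.integrable_coeFn φ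
  filter_upwards [Lp.coeFn_sub (kernelOpL1 ν k₁ hk₁ hkb₁ φ) (kernelOpL1 ν k₂ hk₂ hkb₂ φ),
    coeFn_kernelOpL1 (hk := hk₁) (hkb := hkb₁) φ, coeFn_kernelOpL1 (hk := hk₂) (hkb := hkb₂) φ,
    coeFn_kernelOpL1 (hk := hk) (hkb := hkb) φ,
    (integrable_kernel_apply hk₁ hkb₁ hφ).prod_right_ae,
    (integrable_kernel_apply hk₂ hkb₂ hφ).prod_right_ae] with a h h₁ h₂ h₁₂ hi₁ hi₂
  rw [sub_apply, h, Pi.sub_apply, h₁, h₂, h₁₂]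
  simp only [kernelIntegral, Pi.sub_apply, sub_apply]
  exact (integral_sub hi₁ hi₂).symm

theorem isCompactOperator_kernelOpL1_of_step [CompleteSpace E] {c d : α → ℕ}
    (hc : Measurable c) (hd : Measurable d) (hcf : (range c).Finite) (hdf : (range d).Finite)
    {F : ℕ → ℕ → E →L[ℝ] E} (hkF : ∀ a σ, k (a, σ) = F (c a) (d σ))
    (hkc : ∀ p, IsCompactOperator (k p)) : IsCompactOperator (kernelOpL1 ν k hk hkb) := by
  classical
  have hcs : ∀ a, c a ∈ hcf.toFinset := fun a => hcf.mem_toFinset.2 (mem_range_self a)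
  have hds : ∀ σ, d σ ∈ hdf.toFinset := fun σ => hdf.mem_toFinset.2 (mem_range_self σ)
  let G : ℕ → Lp E 1 ν →L[ℝ] E := fun i =>
    ∑ j ∈ hdf.toFinset, (F i j).comp (setIntegralL1CLM ν (d ⁻¹' {j}))
  let ind : ℕ → E →L[ℝ] Lp E 1 ν := fun i =>
    indicatorConstLpCLM ν 1 (hc (measurableSet_singleton i)) (measure_ne_top _ _)
  have hT : kernelOpL1 ν k hk hkb = ∑ i ∈ hcf.toFinset, (ind i).comp (G i) := by
    ext1 φ
    refine Lp.ext ?_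
    filter_upwards [coeFn_kernelOpL1 φ,
      Lp.coeFn_finset_sum hcf.toFinset fun i => (ind i).comp (G i) φ,
      (eventually_all_finset hcf.toFinset).2 fun i _ => indicatorConstLp_coeFn
        (hs := hc (measurableSet_singleton i)) (hμs := measure_ne_top ν _) (c := G i φ)]
      with a h₁ h₂ h₃
    rw [h₁, sum_apply, h₂, Finset.sum_apply]
    simp only [ContinuousLinearMap.comp_apply, ind, indicatorConstLpCLM_apply]
    rw [Finset.sum_congr rfl h₃]
    simp only [indicator_apply, mem_preimage, mem_singleton_iff, Finset.sum_ite_eq,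
      if_pos (hcs a), G, sum_apply, ContinuousLinearMap.comp_apply,
      setIntegralL1CLM_apply, kernelIntegral, hkF]
    exact integral_apply_eq_sum_setIntegral_fiber hd hds _ (L1.integrable_coeFn φ)
  have hF : ∀ a σ, IsCompactOperator (F (c a) (d σ)) := fun a σ => hkF a σ ▸ hkc (a, σ)
  rw [hT]
  refine Submodule.sum_mem (compactOperator (RingHom.id ℝ) _ _) fun i hi => ?_
  obtain ⟨a, rfl⟩ := hcf.mem_toFinset.1 hi
  refine IsCompactOperator.clm_comp (Submodule.sum_mem (compactOperator (RingHom.id ℝ) _ _)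
    fun j hj => ?_) (ind (c a))
  obtain ⟨σ, rfl⟩ := hdf.mem_toFinset.1 hj
  exact (hF a σ).comp_clm _

end KernelOperator

end MeasureTheory

section GridIndex

variable {b h x : ℝ}

-- `min x b` keeps the index bounded, so a step kernel built from it takes finitely many values.
def gridIndex (b h x : ℝ) : ℕ := ⌊min x b / h⌋₊

theorem measurable_gridIndex : Measurable (gridIndex b h) :=
  Nat.measurable_floor.comp ((measurable_id.min measurable_const).div_const h)

theorem gridIndex_mono (hh : 0 ≤ h) : Monotone (gridIndex b h) := fun _ _ hxy =>
  Nat.floor_le_floor (div_le_div_of_nonneg_right (min_le_min_right b hxy) hh)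

theorem finite_range_gridIndex (hh : 0 ≤ h) : (range (gridIndex b h)).Finite :=
  (finite_Iic ⌊b / h⌋₊).subset <| range_subset_iff.2 fun x =>
    Nat.floor_le_floor (div_le_div_of_nonneg_right (min_le_right x b) hh)

theorem mem_Ico_mul_gridIndex (hh : 0 < h) (hx : x ∈ Icc 0 b) :
    x ∈ Ico (h * gridIndex b h x) (h * gridIndex b h x + h) := by
  rw [gridIndex, min_eq_left hx.2]
  constructor
  · rw [← le_div_iff₀' hh]
    exact Nat.floor_le (div_nonneg hx.1 hh.le)
  · rw [← mul_add_one, ← div_lt_iff₀' hh]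
    exact Nat.lt_floor_add_one _

theorem mul_gridIndex_le (hh : 0 < h) (hpos : 0 < gridIndex b h x) :
    h * gridIndex b h x ≤ b := by
  have h1 : 1 ≤ min x b / h := Nat.floor_pos.1 hpos
  have h2 := Nat.floor_le (zero_le_one.trans h1)
  rw [← le_div_iff₀' hh]
  exact h2.trans (div_le_div_of_nonneg_right (min_le_right x b) hh.le)

end GridIndex

section Volterra

variable {E : Type*} [NormedAddCommGroup E] [NormedSpace ℝ E] (b : ℝ)

def volterraTriangle (b : ℝ) : Set (ℝ × ℝ) := {p | 0 ≤ p.2 ∧ p.2 ≤ p.1 ∧ p.1 ≤ b}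

theorem isClosed_volterraTriangle : IsClosed (volterraTriangle b) :=
  (isClosed_le continuous_const continuous_snd).inter
    ((isClosed_le continuous_snd continuous_fst).inter
      (isClosed_le continuous_fst continuous_const))

theorem isCompact_volterraTriangle : IsCompact (volterraTriangle b) :=
  (isCompact_Icc.prod isCompact_Icc).of_isClosed_subset (isClosed_volterraTriangle b)
    (by rintro p ⟨h0, hle, hb⟩; exact ⟨⟨h0.trans hle, hb⟩, h0, hle.trans hb⟩)

variable {b} {K : ℝ × ℝ → E →L[ℝ] E}

theorem aestronglyMeasurable_indicator_volterraTriangle (hK : ContinuousOn K (volterraTriangle b))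
    (μ : Measure (ℝ × ℝ)) :
    AEStronglyMeasurable ((volterraTriangle b).indicator K) μ :=
  (aestronglyMeasurable_indicator_iff (isClosed_volterraTriangle b).measurableSet).2
    (hK.aestronglyMeasurable (isClosed_volterraTriangle b).measurableSet)

theorem exists_norm_indicator_volterraTriangle_le (hK : ContinuousOn K (volterraTriangle b)) :
    ∃ B, ∀ p, ‖(volterraTriangle b).indicator K p‖ ≤ B := by
  obtain ⟨B, hB⟩ := (isCompact_volterraTriangle b).exists_bound_of_continuousOn hK
  refine ⟨max B 0, fun p => ?_⟩
  by_cases hp : p ∈ volterraTriangle b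
  · rw [indicator_of_mem hp]
    exact (hB p hp).trans (le_max_left _ _)
  · rw [indicator_of_notMem hp, norm_zero]
    exact le_max_right _ _

def volterraOpL1 (hK : ContinuousOn K (volterraTriangle b)) :
    Lp E 1 (volume.restrict (Icc 0 b)) →L[ℝ] Lp E 1 (volume.restrict (Icc 0 b)) :=
  kernelOpL1 _ ((volterraTriangle b).indicator K)
    (aestronglyMeasurable_indicator_volterraTriangle hK _)
    (exists_norm_indicator_volterraTriangle_le hK)

theorem volterraOpL1_ae_eq (hK : ContinuousOn K (volterraTriangle b))
    (φ : Lp E 1 (volume.restrict (Icc 0 b))) :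
    ∀ᵐ a ∂(volume.restrict (Icc 0 b)), volterraOpL1 hK φ a = ∫ σ in 0..a, K (a, σ) (φ σ) := by
  filter_upwards [coeFn_kernelOpL1 φ, ae_restrict_mem measurableSet_Icc] with a h ha
  have hslice : ∀ σ, (volterraTriangle b).indicator K (a, σ) (φ σ)
      = (Icc 0 a).indicator (fun σ => K (a, σ) (φ σ)) σ := by
    intro σ
    by_cases hσ : σ ∈ Icc 0 a
    · have hmem : (a, σ) ∈ volterraTriangle b := ⟨hσ.1, hσ.2, ha.2⟩
      rw [indicator_of_mem hσ, indicator_of_mem hmem]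
    · have hmem : (a, σ) ∉ volterraTriangle b := fun h => hσ ⟨h.1, h.2.1⟩
      rw [indicator_of_notMem hσ, indicator_of_notMem hmem]
      rfl
  rw [volterraOpL1, h, kernelIntegral]
  simp_rw [hslice, integral_indicator measurableSet_Icc,
    Measure.restrict_restrict measurableSet_Icc, inter_eq_left.2 (Icc_subset_Icc_right ha.2),
    intervalIntegral.integral_of_le ha.1, integral_Icc_eq_integral_Ioc]

def volterraStepKernel (b h : ℝ) (K : ℝ × ℝ → E →L[ℝ] E) (p : ℝ × ℝ) : E →L[ℝ] E :=
  if gridIndex b h p.2 < gridIndex b h p.1 then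
    K (h * gridIndex b h p.1, h * gridIndex b h p.2)
  else 0

theorem volterraStepKernel_mem {h : ℝ} (hh : 0 < h) (p : ℝ × ℝ) :
    volterraStepKernel b h K p ∈ insert 0 (K '' volterraTriangle b) := by
  unfold volterraStepKernel
  split_ifs with hlt
  · refine mem_insert_of_mem _ ⟨_, ⟨by positivity, ?_, mul_gridIndex_le hh (by omega)⟩, rfl⟩
    exact mul_le_mul_of_nonneg_left (Nat.cast_le.2 hlt.le) hh.le
  · exact mem_insert _ _

theorem aestronglyMeasurable_volterraStepKernel (h : ℝ) (μ : Measure (ℝ × ℝ)) :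
    AEStronglyMeasurable (volterraStepKernel b h K) μ :=
  ((StronglyMeasurable.of_discrete
    (f := fun ij : ℕ × ℕ => if ij.2 < ij.1 then K (h * ij.1, h * ij.2) else 0)).comp_measurable
    ((measurable_gridIndex.comp measurable_fst).prodMk
      (measurable_gridIndex.comp measurable_snd))).aestronglyMeasurable

theorem norm_volterraStepKernel_le {h B : ℝ} (hh : 0 < h)
    (hB : ∀ p, ‖(volterraTriangle b).indicator K p‖ ≤ B) (p : ℝ × ℝ) :
    ‖volterraStepKernel b h K p‖ ≤ B := by
  rcases volterraStepKernel_mem (b := b) (K := K) hh p with h0 | ⟨q, hq, hqp⟩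
  · rw [h0, norm_zero]
    exact (norm_nonneg _).trans (hB 0)
  · rw [← hqp, ← indicator_of_mem hq K]
    exact hB q

variable (hK : ContinuousOn K (volterraTriangle b)) {h : ℝ}

def volterraStepOpL1 (hh : 0 < h) :
    Lp E 1 (volume.restrict (Icc 0 b)) →L[ℝ] Lp E 1 (volume.restrict (Icc 0 b)) :=
  kernelOpL1 _ (volterraStepKernel b h K) (aestronglyMeasurable_volterraStepKernel h _)
    (let ⟨_, hB⟩ := exists_norm_indicator_volterraTriangle_le hK
     ⟨_, norm_volterraStepKernel_le hh hB⟩)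

theorem isCompactOperator_volterraStepOpL1 [CompleteSpace E] (hh : 0 < h)
    (hKc : ∀ p ∈ volterraTriangle b, IsCompactOperator (K p)) :
    IsCompactOperator (volterraStepOpL1 hK hh) := by
  refine isCompactOperator_kernelOpL1_of_step measurable_gridIndex measurable_gridIndex
    (finite_range_gridIndex hh.le) (finite_range_gridIndex hh.le)
    (F := fun i j => if j < i then K (h * i, h * j) else 0) (fun _ _ => rfl) fun p => ?_
  rcases volterraStepKernel_mem (b := b) (K := K) hh p with h0 | ⟨q, hq, hqp⟩
  · rw [h0]
    exact isCompactOperator_zero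
  · rw [← hqp]
    exact hKc q hq

theorem norm_indicator_sub_volterraStepKernel_le (hh : 0 < h) {ε B : ℝ}
    (hB : ∀ p, ‖(volterraTriangle b).indicator K p‖ ≤ B)
    (hKε : ∀ p ∈ volterraTriangle b, ∀ q ∈ volterraTriangle b, dist p q < h →
      dist (K p) (K q) ≤ ε)
    {a σ : ℝ} (ha : a ∈ Icc 0 b) (hσ : σ ∈ Icc 0 b) :
    ‖(volterraTriangle b).indicator K (a, σ) - volterraStepKernel b h K (a, σ)‖ ≤
      ε + (Ico (h * gridIndex b h σ) (h * gridIndex b h σ + h)).indicator (fun _ => B) a := by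
  have haa : (a, a) ∈ volterraTriangle b := ⟨ha.1, le_rfl, ha.2⟩
  have hε : 0 ≤ ε := dist_nonneg.trans (hKε _ haa _ haa (by simpa using hh))
  have hind : 0 ≤ (Ico (h * gridIndex b h σ) (h * gridIndex b h σ + h)).indicator
      (fun _ => B) a := indicator_nonneg (fun _ _ => (norm_nonneg _).trans (hB 0)) a
  have hσI := mem_Ico_mul_gridIndex hh hσ
  have haI := mem_Ico_mul_gridIndex hh ha
  rcases lt_trichotomy (gridIndex b h σ) (gridIndex b h a) with hlt | heq | hgt
  · have hσa : σ < a := lt_of_not_ge fun h' => hlt.not_ge (gridIndex_mono hh.le h')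
    have hmem : (a, σ) ∈ volterraTriangle b := ⟨hσ.1, hσa.le, ha.2⟩
    rw [volterraStepKernel, if_pos hlt, indicator_of_mem hmem, ← dist_eq_norm]
    refine (hKε _ hmem _ ?_ ?_).trans (le_add_of_nonneg_right hind)
    · exact ⟨by positivity, mul_le_mul_of_nonneg_left (Nat.cast_le.2 hlt.le) hh.le,
        mul_gridIndex_le hh ((Nat.zero_le _).trans_lt hlt)⟩
    · obtain ⟨ha₁, ha₂⟩ := haI
      obtain ⟨hσ₁, hσ₂⟩ := hσI
      rw [Prod.dist_eq, Real.dist_eq, Real.dist_eq]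
      exact max_lt (abs_sub_lt_iff.2 ⟨by linarith, by linarith⟩)
        (abs_sub_lt_iff.2 ⟨by linarith, by linarith⟩)
  · rw [volterraStepKernel, if_neg heq.not_lt, sub_zero, heq, indicator_of_mem haI]
    exact (hB _).trans (le_add_of_nonneg_left hε)
  · have haσ : a < σ := lt_of_not_ge fun h' => hgt.not_ge (gridIndex_mono hh.le h')
    rw [volterraStepKernel, if_neg (not_lt_of_gt hgt),
      indicator_of_notMem fun hp : (a, σ) ∈ volterraTriangle b => haσ.not_ge hp.2.1, sub_zero,
      norm_zero]
    exact add_nonneg hε hind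

theorem integral_norm_indicator_sub_volterraStepKernel_le (hh : 0 < h) {ε B : ℝ}
    (hB : ∀ p, ‖(volterraTriangle b).indicator K p‖ ≤ B)
    (hKε : ∀ p ∈ volterraTriangle b, ∀ q ∈ volterraTriangle b, dist p q < h →
      dist (K p) (K q) ≤ ε)
    {σ : ℝ} (hσ : σ ∈ Icc 0 b) :
    ∫ a, ‖(volterraTriangle b).indicator K (a, σ) - volterraStepKernel b h K (a, σ)‖
      ∂(volume.restrict (Icc 0 b)) ≤ ε * volume.real (Icc 0 b) + B * h := by
  have hB0 : 0 ≤ B := (norm_nonneg _).trans (hB 0)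
  set I := Ico (h * gridIndex b h σ) (h * gridIndex b h σ + h)
  have hI : Integrable (fun a => ε + I.indicator (fun _ => B) a) (volume.restrict (Icc 0 b)) :=
    (integrable_const ε).add ((integrable_const B).indicator measurableSet_Ico)
  calc _ ≤ ∫ a, (ε + I.indicator (fun _ => B) a) ∂(volume.restrict (Icc 0 b)) :=
        integral_mono_of_nonneg (ae_of_all _ fun _ => norm_nonneg _) hI
          ((ae_restrict_mem measurableSet_Icc).mono fun a ha =>
            norm_indicator_sub_volterraStepKernel_le hh hB hKε ha hσ)
    _ = ε * volume.real (Icc 0 b) + B * (volume.restrict (Icc 0 b)).real I := by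
        rw [integral_add (integrable_const ε) ((integrable_const B).indicator measurableSet_Ico),
          integral_const, integral_indicator_const B measurableSet_Ico,
          measureReal_restrict_apply_univ, smul_eq_mul, smul_eq_mul, mul_comm ε, mul_comm B]
    _ ≤ ε * volume.real (Icc 0 b) + B * h := by
        gcongr
        rw [measureReal_restrict_apply measurableSet_Ico]
        exact (measureReal_mono inter_subset_left measure_Ico_lt_top.ne).trans_eq
          ((Real.volume_real_Ico_of_le (by linarith)).trans (by ring))

theorem norm_volterraOpL1_sub_volterraStepOpL1_le (hh : 0 < h) {ε B : ℝ} (hε : 0 ≤ ε)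
    (hB : ∀ p, ‖(volterraTriangle b).indicator K p‖ ≤ B)
    (hKε : ∀ p ∈ volterraTriangle b, ∀ q ∈ volterraTriangle b, dist p q < h →
      dist (K p) (K q) ≤ ε) :
    ‖volterraOpL1 hK - volterraStepOpL1 hK hh‖ ≤ ε * volume.real (Icc 0 b) + B * h := by
  rw [volterraOpL1, volterraStepOpL1,
    kernelOpL1_sub (hk := (aestronglyMeasurable_indicator_volterraTriangle hK _).sub
      (aestronglyMeasurable_volterraStepKernel h _))
      (hkb := ⟨B + B, fun p => (norm_sub_le _ _).trans
        (add_le_add (hB p) (norm_volterraStepKernel_le hh hB p))⟩)]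
  have hB0 : 0 ≤ B := (norm_nonneg _).trans (hB 0)
  exact norm_kernelOpL1_le (by positivity) ((ae_restrict_mem measurableSet_Icc).mono
    fun σ hσ => integral_norm_indicator_sub_volterraStepKernel_le hh hB hKε hσ)

theorem volterraOpL1_mem_closure_setOf_isCompactOperator [CompleteSpace E]
    (hKc : ∀ p ∈ volterraTriangle b, IsCompactOperator (K p)) :
    volterraOpL1 hK ∈ closure {W : Lp E 1 (volume.restrict (Icc 0 b)) →L[ℝ]
      Lp E 1 (volume.restrict (Icc 0 b)) | IsCompactOperator W} := by
  refine Metric.mem_closure_iff.2 fun ε hε => ?_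
  set m := volume.real (Icc (0 : ℝ) b)
  obtain ⟨B, hB⟩ := exists_norm_indicator_volterraTriangle_le hK
  have hB0 : 0 ≤ B := (norm_nonneg _).trans (hB 0)
  obtain ⟨δ, hδ, hKδ⟩ := Metric.uniformContinuousOn_iff.1
    ((isCompact_volterraTriangle b).uniformContinuousOn_of_continuous hK)
    (ε / (2 * (m + 1))) (by positivity)
  have hh : 0 < min δ (ε / (2 * (B + 1))) := lt_min hδ (by positivity)
  refine ⟨volterraStepOpL1 hK hh, isCompactOperator_volterraStepOpL1 hK hh hKc, ?_⟩
  rw [dist_eq_norm]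
  refine (norm_volterraOpL1_sub_volterraStepOpL1_le hK hh (by positivity) hB
    fun p hp q hq hpq => (hKδ p hp q hq (hpq.trans_le (min_le_left _ _))).le).trans_lt ?_
  have hm : ε / (2 * (m + 1)) * m < ε / 2 := by
    rw [div_mul_eq_mul_div, div_lt_div_iff₀ (by positivity) two_pos]
    nlinarith [measureReal_nonneg (μ := volume) (s := Icc (0 : ℝ) b)]
  have hBh : B * min δ (ε / (2 * (B + 1))) < ε / 2 :=
    calc B * min δ (ε / (2 * (B + 1))) ≤ B * (ε / (2 * (B + 1))) :=
          mul_le_mul_of_nonneg_left (min_le_right _ _) hB0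
      _ < ε / 2 := by
          rw [mul_div_assoc', div_lt_div_iff₀ (by positivity) two_pos]
          nlinarith
  linarith

theorem isCompactOperator_volterraOpL1
    (hKc : ∀ p ∈ volterraTriangle b, IsCompactOperator (K p)) :
    IsCompactOperator (volterraOpL1 hK) := by
  by_cases hE : CompleteSpace E
  · exact isClosed_setOfPred_isCompactOperator.closure_subset
      (volterraOpL1_mem_closure_setOf_isCompactOperator hK hKc)
  · -- Without completeness every Bochner integral is `0`, hence so is the operator.
    have hzero : volterraOpL1 hK = 0 := by
      ext1 φ
      refine Lp.ext ?_
      filter_upwards [coeFn_kernelOpL1 φ, Lp.coeFn_zero E 1 (volume.restrict (Icc (0 : ℝ) b))]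
        with a h₁ h₂
      rw [volterraOpL1, h₁, zero_apply, h₂, kernelIntegral, integral_of_not_completeSpace hE]
      rfl
    rw [hzero]
    exact isCompactOperator_zero

end Volterra

end

theorem regularized_volterra_operator_compact_general
    {E₀ Eϑ : Type*} [NormedAddCommGroup E₀] [NormedSpace ℝ E₀]
    [NormedAddCommGroup Eϑ] [NormedSpace ℝ Eϑ]
    (ι : Eϑ →L[ℝ] E₀)
    (hι_cpt : IsCompactOperator (ι : Eϑ →L[ℝ] E₀))
    (a_m : ℝ)
    (P : ℝ → ℝ → E₀ →L[ℝ] E₀) (Pθ : ℝ → ℝ → E₀ →L[ℝ] Eϑ)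
    -- (E2)
    (hE2 : ContinuousOn (fun p : ℝ × ℝ => P p.1 p.2)
      {p : ℝ × ℝ | 0 ≤ p.2 ∧ p.2 < p.1 ∧ p.1 ≤ 2 * a_m})
    -- (E3)
    (hE3 : ∀ σ a, 0 ≤ σ → σ < a → a ≤ 2 * a_m → ι.comp (Pθ a σ) = P a σ)
    -- fixed μ ∈ (0, a_m]
    (μ : ℝ) (hμ : μ ∈ Set.Ioc (0 : ℝ) a_m) :
    ∃ V : Lp E₀ 1 (volume.restrict (Set.Icc (0 : ℝ) a_m)) →L[ℝ]
          Lp E₀ 1 (volume.restrict (Set.Icc (0 : ℝ) a_m)),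
      -- V^μ is given by the regularized Volterra integral formula
      (∀ φ : Lp E₀ 1 (volume.restrict (Set.Icc (0 : ℝ) a_m)),
        ∀ᵐ a ∂(volume.restrict (Set.Icc (0 : ℝ) a_m)),
          (V φ : ℝ → E₀) a = ∫ σ in (0 : ℝ)..a, P (μ + a) σ ((φ : ℝ → E₀) σ)) ∧
      -- V^μ is a compact operator
      IsCompactOperator (V : Lp E₀ 1 (volume.restrict (Set.Icc (0 : ℝ) a_m)) →L[ℝ]
          Lp E₀ 1 (volume.restrict (Set.Icc (0 : ℝ) a_m))) ∧
      -- that is: the image of every bounded sequence is relatively compact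
      (∀ (φ : ℕ → Lp E₀ 1 (volume.restrict (Set.Icc (0 : ℝ) a_m))) (C : ℝ),
        (∀ j, ‖φ j‖ ≤ C) →
        IsCompact (closure (Set.range fun j => V (φ j)))) := by
  obtain ⟨hμ0, hμa⟩ := hμ
  have hK : ContinuousOn (fun p : ℝ × ℝ => P (μ + p.1) p.2) (volterraTriangle a_m) := by
    refine hE2.comp ((continuous_const.add continuous_fst).prodMk continuous_snd).continuousOn ?_
    rintro ⟨a, σ⟩ ⟨h0, hσa, ha⟩
    dsimp only at h0 hσa ha
    exact ⟨h0, show σ < μ + a by linarith, show μ + a ≤ 2 * a_m by linarith⟩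
  have hKc : ∀ p ∈ volterraTriangle a_m, IsCompactOperator (P (μ + p.1) p.2) := by
    rintro ⟨a, σ⟩ ⟨h0, hσa, ha⟩
    rw [← hE3 σ (μ + a) h0 (by linarith) (by linarith)]
    exact hι_cpt.comp_clm _
  have hV := isCompactOperator_volterraOpL1 hK hKc
  exact ⟨volterraOpL1 hK, volterraOpL1_ae_eq hK, hV, fun φ C hC =>
    hV.isCompact_closure_range_apply_of_norm_le hC⟩

/-- Under (E1)–(E4), for every fixed `μ ∈ (0, a_m]` the linear operator
`V^μ : L¹(J,E₀) → L¹(J,E₀)`, `(V^μ φ)(a) = ∫₀^a Π(μ+a,σ)φ(σ) dσ`, is compact; that is,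
for every bounded sequence `(φ_j)` in `L¹(J,E₀)` the set `{v_{φ_j}^μ : j ∈ ℕ}` is
relatively compact in `L¹(J,E₀)`. -/
theorem regularized_volterra_operator_compact
    {E₀ Eϑ : Type*} [NormedAddCommGroup E₀] [NormedSpace ℝ E₀]
    [NormedAddCommGroup Eϑ] [NormedSpace ℝ Eϑ]
    (ι : Eϑ →L[ℝ] E₀) (hι_inj : Function.Injective ι)
    (hι_cpt : IsCompactOperator (ι : Eϑ →L[ℝ] E₀))
    (a_m : ℝ) (ha_m : 0 < a_m)
    (ϑ : ℝ) (hϑ : ϑ ∈ Set.Ioo (0 : ℝ) 1)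
    (M : ℝ) (hM : 1 ≤ M)
    (P : ℝ → ℝ → E₀ →L[ℝ] E₀) (Pθ : ℝ → ℝ → E₀ →L[ℝ] Eϑ)
    -- (E1)
    (hE1a : ∀ a, 0 ≤ a → a ≤ 2 * a_m → P a a = ContinuousLinearMap.id ℝ E₀)
    (hE1b : ∀ σ ρ a, 0 ≤ σ → σ ≤ ρ → ρ ≤ a → a ≤ 2 * a_m →
      (P a ρ).comp (P ρ σ) = P a σ)
    -- (E2)
    (hE2 : ContinuousOn (fun p : ℝ × ℝ => P p.1 p.2)
      {p : ℝ × ℝ | 0 ≤ p.2 ∧ p.2 < p.1 ∧ p.1 ≤ 2 * a_m})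
    -- (E3)
    (hE3 : ∀ σ a, 0 ≤ σ → σ < a → a ≤ 2 * a_m → ι.comp (Pθ a σ) = P a σ)
    -- (E4)
    (hE4a : ∀ σ a, 0 ≤ σ → σ ≤ a → a ≤ 2 * a_m → ‖P a σ‖ ≤ M)
    (hE4b : ∀ σ a, 0 ≤ σ → σ < a → a ≤ 2 * a_m → (a - σ) ^ ϑ * ‖Pθ a σ‖ ≤ M)
    -- fixed μ ∈ (0, a_m]
    (μ : ℝ) (hμ : μ ∈ Set.Ioc (0 : ℝ) a_m) :
    ∃ V : Lp E₀ 1 (volume.restrict (Set.Icc (0 : ℝ) a_m)) →L[ℝ]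
          Lp E₀ 1 (volume.restrict (Set.Icc (0 : ℝ) a_m)),
      -- V^μ is given by the regularized Volterra integral formula
      (∀ φ : Lp E₀ 1 (volume.restrict (Set.Icc (0 : ℝ) a_m)),
        ∀ᵐ a ∂(volume.restrict (Set.Icc (0 : ℝ) a_m)),
          (V φ : ℝ → E₀) a = ∫ σ in (0 : ℝ)..a, P (μ + a) σ ((φ : ℝ → E₀) σ)) ∧
      -- V^μ is a compact operator
      IsCompactOperator (V : Lp E₀ 1 (volume.restrict (Set.Icc (0 : ℝ) a_m)) →L[ℝ]
          Lp E₀ 1 (volume.restrict (Set.Icc (0 : ℝ) a_m))) ∧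
      -- that is: the image of every bounded sequence is relatively compact
      (∀ (φ : ℕ → Lp E₀ 1 (volume.restrict (Set.Icc (0 : ℝ) a_m))) (C : ℝ),
        (∀ j, ‖φ j‖ ≤ C) →
        IsCompact (closure (Set.range fun j => V (φ j)))) :=
  regularized_volterra_operator_compact_general ι hι_cpt a_m P Pθ hE2 hE3 μ hμ
end

section
/- Let F : J → L(E₀) be a family of bounded linear operators with ‖F(a)‖_{L(E₀)} ≤ M for all a ∈ J, and suppose there are constants c > 0 and ϑ ∈ (0,1) with the Hölder estimate ‖(F(a+h) − F(a)) ∘ ι‖_{L(Eϑ,E₀)} ≤ c h^ϑ whenever 0 ≤ a ≤ a+h ≤ a_m. Then for every bounded sequence (x_j) in Eϑ, the sequence of continuous functions f_j : J → E₀, f_j(a) := F(a)(ι(x_j)), has a subsequence converging uniformly on J; that is, {f_j : j ∈ ℕ} is relatively compact in C(J,E₀). -/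
/-!
The compact embedding sends the bounded sequence `xⱼ` into a compact subset of `E₀`, so a
subsequence `ι (x (s k))` converges to some `y`. Since `‖F a‖ ≤ M` uniformly on `J`, the functions
`a ↦ F a (ι (x (s k)))` then converge to `a ↦ F a y` uniformly on `J`. The Hölder estimate makes
each of them continuous, hence so is their uniform limit.
-/

open Set Filter Topology

theorem IsCompactOperator.exists_tendsto_subseq
    {𝕜 E F : Type*} [NontriviallyNormedField 𝕜] [NormedAddCommGroup E] [NormedSpace 𝕜 E]
    [NormedAddCommGroup F] [NormedSpace 𝕜 F] {f : E →L[𝕜] F} (hf : IsCompactOperator f)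
    {x : ℕ → E} (hx : Bornology.IsBounded (range x)) :
    ∃ y, ∃ s : ℕ → ℕ, StrictMono s ∧ Tendsto (f ∘ x ∘ s) atTop (𝓝 y) := by
  obtain ⟨K, hK, hfK⟩ := hf.image_subset_compact_of_bounded (f := (f : E →ₗ[𝕜] F)) hx
  obtain ⟨y, -, s, hs, hy⟩ := hK.tendsto_subseq fun j => hfK ⟨x j, mem_range_self j, rfl⟩
  exact ⟨y, s, hs, hy⟩

theorem tendstoUniformlyOn_apply_of_norm_le
    {𝕜 α ι E F : Type*} [NontriviallyNormedField 𝕜] [SeminormedAddCommGroup E]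
    [NormedSpace 𝕜 E] [SeminormedAddCommGroup F] [NormedSpace 𝕜 F]
    {G : α → E →L[𝕜] F} {s : Set α} {M : ℝ} (hG : ∀ a ∈ s, ‖G a‖ ≤ M)
    {l : Filter ι} {u : ι → E} {y : E} (hu : Tendsto u l (𝓝 y)) :
    TendstoUniformlyOn (fun k a => G a (u k)) (fun a => G a y) l s := by
  rw [Metric.tendstoUniformlyOn_iff]
  intro ε hε
  have hlim := (tendsto_iff_norm_sub_tendsto_zero.mp hu).const_mul M
  rw [mul_zero] at hlim
  filter_upwards [hlim.eventually (gt_mem_nhds hε)] with k hk a ha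
  calc dist (G a y) (G a (u k)) = ‖G a (u k - y)‖ := by rw [dist_eq_norm', map_sub]
    _ ≤ ‖G a‖ * ‖u k - y‖ := (G a).le_opNorm _
    _ ≤ M * ‖u k - y‖ := by gcongr; exact hG a ha
    _ < ε := hk

theorem continuousOn_of_norm_sub_le_mul_dist_rpow
    {X E : Type*} [PseudoMetricSpace X] [SeminormedAddCommGroup E]
    {f : X → E} {s : Set X} {K r : ℝ} (hr : 0 < r)
    (hf : ∀ a ∈ s, ∀ b ∈ s, ‖f b - f a‖ ≤ K * dist b a ^ r) : ContinuousOn f s := by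
  intro a ha
  rw [ContinuousWithinAt, tendsto_iff_norm_sub_tendsto_zero]
  have hlim : Tendsto (fun b => K * dist b a ^ r) (𝓝[s] a) (𝓝 0) := by
    have hdist : Tendsto (fun b => dist b a) (𝓝[s] a) (𝓝 0) :=
      tendsto_nhdsWithin_of_tendsto_nhds ((continuous_id.dist continuous_const).tendsto' a 0 (dist_self a))
    simpa [Real.zero_rpow hr.ne'] using (hdist.rpow_const (Or.inr hr.le)).const_mul K
  exact squeeze_zero' (Eventually.of_forall fun _ => norm_nonneg _)
    (eventually_nhdsWithin_of_forall fun b hb => hf a ha b hb) hlim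

theorem norm_apply_sub_le_of_holder
    {𝕜 Eϑ E₀ E₁ : Type*} [NontriviallyNormedField 𝕜] [SeminormedAddCommGroup Eϑ]
    [NormedSpace 𝕜 Eϑ] [SeminormedAddCommGroup E₀] [NormedSpace 𝕜 E₀]
    [SeminormedAddCommGroup E₁] [NormedSpace 𝕜 E₁]
    {ι : Eϑ →L[𝕜] E₀} {a_m : ℝ} {F : ℝ → E₀ →L[𝕜] E₁} {c ϑ : ℝ}
    (hHolder : ∀ a h : ℝ, 0 ≤ a → 0 ≤ h → a + h ≤ a_m →
      ‖(F (a + h) - F a).comp ι‖ ≤ c * h ^ ϑ)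
    (z : Eϑ) {a b : ℝ} (ha : a ∈ Icc 0 a_m) (hb : b ∈ Icc 0 a_m) :
    ‖F b (ι z) - F a (ι z)‖ ≤ c * ‖z‖ * dist b a ^ ϑ := by
  wlog hab : a ≤ b generalizing a b
  · rw [norm_sub_rev, dist_comm]
    exact this hb ha (le_of_not_ge hab)
  have hstep := hHolder a (b - a) ha.1 (sub_nonneg.2 hab) (by linarith [hb.2])
  rw [add_sub_cancel] at hstep
  calc ‖F b (ι z) - F a (ι z)‖ = ‖((F b - F a).comp ι) z‖ := rfl
    _ ≤ ‖(F b - F a).comp ι‖ * ‖z‖ := ContinuousLinearMap.le_opNorm _ _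
    _ ≤ c * (b - a) ^ ϑ * ‖z‖ := by gcongr
    _ = c * ‖z‖ * dist b a ^ ϑ := by rw [Real.dist_eq, abs_of_nonneg (sub_nonneg.2 hab)]; ring

theorem holder_family_relatively_compact_in_C_general
    {E₀ Eϑ : Type*} [NormedAddCommGroup E₀] [NormedSpace ℝ E₀]
    [NormedAddCommGroup Eϑ] [NormedSpace ℝ Eϑ]
    (ι : Eϑ →L[ℝ] E₀)
    (hι_cpt : IsCompactOperator (ι : Eϑ →L[ℝ] E₀))
    (a_m : ℝ)
    (F : ℝ → E₀ →L[ℝ] E₀) (M : ℝ)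
    (hF_bd : ∀ a ∈ Set.Icc (0 : ℝ) a_m, ‖F a‖ ≤ M)
    (c ϑ : ℝ) (hϑ : ϑ ∈ Set.Ioo (0 : ℝ) 1)
    (hHolder : ∀ a h : ℝ, 0 ≤ a → 0 ≤ h → a + h ≤ a_m →
      ‖(F (a + h) - F a).comp ι‖ ≤ c * h ^ ϑ)
    (x : ℕ → Eϑ) (C : ℝ) (hx : ∀ j, ‖x j‖ ≤ C) :
    ∃ s : ℕ → ℕ, StrictMono s ∧
      ∃ g : ℝ → E₀, ContinuousOn g (Set.Icc (0 : ℝ) a_m) ∧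
        TendstoUniformlyOn (fun k a => F a (ι (x (s k)))) g atTop (Set.Icc (0 : ℝ) a_m) := by
  have hx_bdd : Bornology.IsBounded (range x) :=
    isBounded_iff_forall_norm_le.2 ⟨C, forall_mem_range.2 hx⟩
  obtain ⟨y, s, hs, hy⟩ := hι_cpt.exists_tendsto_subseq hx_bdd
  have hunif := tendstoUniformlyOn_apply_of_norm_le hF_bd hy
  refine ⟨s, hs, _, hunif.continuousOn (Frequently.of_forall fun k => ?_), hunif⟩
  exact continuousOn_of_norm_sub_le_mul_dist_rpow hϑ.1 fun a ha b hb =>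
    norm_apply_sub_le_of_holder hHolder (x (s k)) ha hb

/-- Let `F : J → L(E₀)` with `‖F(a)‖ ≤ M` on `J` and the Hölder estimate
`‖(F(a+h) − F(a)) ∘ ι‖_{L(Eϑ,E₀)} ≤ c h^ϑ` for `0 ≤ a ≤ a+h ≤ a_m`. Then for every
bounded sequence `(x_j)` in `Eϑ`, the sequence of functions `f_j(a) := F(a)(ι(x_j))`
has a subsequence converging uniformly on `J`, i.e. `{f_j}` is relatively compact in
`C(J,E₀)`. -/
theorem holder_family_relatively_compact_in_C
    {E₀ Eϑ : Type*} [NormedAddCommGroup E₀] [NormedSpace ℝ E₀]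
    [NormedAddCommGroup Eϑ] [NormedSpace ℝ Eϑ]
    (ι : Eϑ →L[ℝ] E₀) (hι_inj : Function.Injective ι)
    (hι_cpt : IsCompactOperator (ι : Eϑ →L[ℝ] E₀))
    (a_m : ℝ) (ha_m : 0 < a_m)
    (F : ℝ → E₀ →L[ℝ] E₀) (M : ℝ)
    (hF_bd : ∀ a ∈ Set.Icc (0 : ℝ) a_m, ‖F a‖ ≤ M)
    (c ϑ : ℝ) (hc : 0 < c) (hϑ : ϑ ∈ Set.Ioo (0 : ℝ) 1)
    (hHolder : ∀ a h : ℝ, 0 ≤ a → 0 ≤ h → a + h ≤ a_m →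
      ‖(F (a + h) - F a).comp ι‖ ≤ c * h ^ ϑ)
    (x : ℕ → Eϑ) (C : ℝ) (hx : ∀ j, ‖x j‖ ≤ C) :
    ∃ s : ℕ → ℕ, StrictMono s ∧
      ∃ g : ℝ → E₀, ContinuousOn g (Set.Icc (0 : ℝ) a_m) ∧
        TendstoUniformlyOn (fun k a => F a (ι (x (s k)))) g atTop (Set.Icc (0 : ℝ) a_m) :=
  holder_family_relatively_compact_in_C_general ι hι_cpt a_m F M hF_bd c ϑ hϑ hHolder x C hx
end
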